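/- arXiv:1908.03765 — 5 statements merged into one kernel-verified Lean document; each statement's English description precedes it below -/
import Mathlib

section
/- Let K be a field and a, b integers with 2 ≤ a ≤ b, and let J = (x^a, y^b). Then: (i) for p = (1, b−1), the ideal I_p = (x^a, y^b, x y^{b−1}) satisfies I_p^a = J·I_p^{a−1} and I_p^{a−1} ≠ J·I_p^{a−2}, i.e. its reduction number equals a − 1; (ii) for any pair p = (c,d) with 0 < c < a, 0 < d < b and bc + ad ≥ ab, the ideal I_p = (x^a, y^b, x^c y^d) satisfies I_p² = J·I_p if and only if a ≤ 2c and b ≤ 2d, i.e. the reduction number of I_p equals 1 precisely when (a/2, b/2) ≤ (c,d). -/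
open MvPolynomial

/-- The monomial `x^c y^d` in `K[x,y]`. -/
noncomputable def mono (K : Type*) [Field K] (c d : ℕ) : MvPolynomial (Fin 2) K :=
  X 0 ^ c * X 1 ^ d

/-- The ideal `J = (x^a, y^b)`. -/
noncomputable def Jab (K : Type*) [Field K] (a b : ℕ) : Ideal (MvPolynomial (Fin 2) K) :=
  Ideal.span {mono K a 0, mono K 0 b}

/-- For `A ⊆ {0,…,g}` with `g = gcd(a,b)`, the ideal `I_A` generated by the
monomials `x^(i·(a/g)) y^(b − i·(b/g))` for `i ∈ A`. -/
noncomputable def IA (K : Type*) [Field K] (a b : ℕ) (A : Finset ℕ) :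
    Ideal (MvPolynomial (Fin 2) K) :=
  Ideal.span ((fun i : ℕ =>
    mono K (i * (a / Nat.gcd a b)) (b - i * (b / Nat.gcd a b))) '' (A : Set ℕ))

/-- The reduction number of `I` with respect to `J = (x^a, y^b)`: the least `r ≥ 0`
with `I^(r+1) = J·I^r`. -/
noncomputable def redNum (K : Type*) [Field K] (a b : ℕ)
    (I : Ideal (MvPolynomial (Fin 2) K)) : ℕ :=
  sInf {r : ℕ | I ^ (r + 1) = Jab K a b * I ^ r}

/- ### Auxiliary machinery -/

open Pointwise

section Aux

/-- combinations lie in the `n`-fold pointwise sum -/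
lemma stmt9_comb_mem {α : Type*} [AddCommMonoid α] (u v w : α) :
    ∀ n i j k : ℕ, i + j + k = n →
    i • u + j • v + k • w ∈ n • ({u, v, w} : Set α) := by
  intro n
  induction n with
  | zero =>
    intro i j k h
    obtain ⟨rfl, rfl, rfl⟩ : i = 0 ∧ j = 0 ∧ k = 0 := by omega
    simp [zero_nsmul]
  | succ n ih =>
    intro i j k h
    rw [succ_nsmul]
    rcases i with _ | i
    · rcases j with _ | j
      · rcases k with _ | k
        · omega
        · have he : (0:ℕ) • u + (0:ℕ) • v + (k+1) • w
              = ((0:ℕ) • u + (0:ℕ) • v + k • w) + w := by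
            rw [succ_nsmul]; abel
          rw [he]
          exact Set.add_mem_add (ih 0 0 k (by omega)) (by simp)
      · have he : (0:ℕ) • u + (j+1) • v + k • w
            = ((0:ℕ) • u + j • v + k • w) + v := by
          rw [succ_nsmul]; abel
        rw [he]
        exact Set.add_mem_add (ih 0 j k (by omega)) (by simp)
    · have he : (i+1) • u + j • v + k • w = (i • u + j • v + k • w) + u := by
        rw [succ_nsmul]; abel
      rw [he]
      exact Set.add_mem_add (ih i j k (by omega)) (by simp)

/-- elements of the `n`-fold pointwise sum are combinations -/
lemma stmt9_mem_comb {α : Type*} [AddCommMonoid α] (u v w : α) :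
    ∀ (n : ℕ) (f : α), f ∈ n • ({u, v, w} : Set α) →
    ∃ i j k : ℕ, i + j + k = n ∧ f = i • u + j • v + k • w := by
  intro n
  induction n with
  | zero =>
    intro f hf
    rw [zero_nsmul] at hf
    refine ⟨0, 0, 0, rfl, ?_⟩
    simp only [Set.mem_zero] at hf
    simp [hf, zero_nsmul]
  | succ n ih =>
    intro f hf
    rw [succ_nsmul] at hf
    obtain ⟨g, hg, h, hh, rfl⟩ := Set.mem_add.mp hf
    obtain ⟨i, j, k, hn, rfl⟩ := ih g hg
    rcases hh with rfl | rfl | rfl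
    · exact ⟨i+1, j, k, by omega, by rw [succ_nsmul]; abel⟩
    · exact ⟨i, j+1, k, by omega, by rw [succ_nsmul]; abel⟩
    · exact ⟨i, j, k+1, by omega, by rw [succ_nsmul]; abel⟩

/-- exponent vector `(m, n)` -/
noncomputable def stmt9E (m n : ℕ) : Fin 2 →₀ ℕ :=
  Finsupp.single 0 m + Finsupp.single 1 n

/-- monomial ideal with exponent set `s` -/
noncomputable def stmt9M (K : Type*) [Field K] (s : Set (Fin 2 →₀ ℕ)) :
    Ideal (MvPolynomial (Fin 2) K) :=
  Ideal.span ((fun e => monomial e (1:K)) '' s)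

variable (K : Type*) [Field K]

lemma stmt9_mono_eq (m n : ℕ) : mono K m n = monomial (stmt9E m n) (1:K) := by
  simp [mono, stmt9E, X_pow_eq_monomial, monomial_mul]

lemma stmt9E_add (m n p q : ℕ) : stmt9E m p + stmt9E n q = stmt9E (m+n) (p+q) := by
  simp [stmt9E, Finsupp.single_add, add_add_add_comm]

lemma stmt9E_smul (k m n : ℕ) : k • stmt9E m n = stmt9E (k*m) (k*n) := by
  simp [stmt9E, smul_add, Finsupp.smul_single]

lemma stmt9E_le (m n p q : ℕ) : stmt9E m n ≤ stmt9E p q ↔ m ≤ p ∧ n ≤ q := by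
  constructor
  · intro h
    exact ⟨by simpa [stmt9E] using h 0, by simpa [stmt9E] using h 1⟩
  · rintro ⟨h1, h2⟩ i
    fin_cases i
    · simpa [stmt9E] using h1
    · simpa [stmt9E] using h2

lemma stmt9M_mul (s t : Set (Fin 2 →₀ ℕ)) : stmt9M K s * stmt9M K t = stmt9M K (s + t) := by
  unfold stmt9M
  rw [Ideal.span_mul_span']
  congr 1
  rw [← Set.image2_add, ← Set.image2_mul, Set.image2_image_left, Set.image2_image_right,
    Set.image_image2]
  simp only [monomial_mul, one_mul]

lemma stmt9M_pow (s : Set (Fin 2 →₀ ℕ)) (n : ℕ) : stmt9M K s ^ n = stmt9M K (n • s) := by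
  induction n with
  | zero => simp [stmt9M, Ideal.one_eq_top]
  | succ n ih => rw [pow_succ, ih, stmt9M_mul, succ_nsmul]

lemma stmt9_monomial_mem (e : Fin 2 →₀ ℕ) (s : Set (Fin 2 →₀ ℕ)) :
    monomial e (1:K) ∈ stmt9M K s ↔ ∃ f ∈ s, f ≤ e := by
  rw [stmt9M, mem_ideal_span_monomial_image]
  simp [support_monomial]

lemma stmt9_span3 (m1 n1 m2 n2 m3 n3 : ℕ) :
    Ideal.span {mono K m1 n1, mono K m2 n2, mono K m3 n3}
      = stmt9M K {stmt9E m1 n1, stmt9E m2 n2, stmt9E m3 n3} := by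
  unfold stmt9M
  rw [Set.image_insert_eq, Set.image_insert_eq, Set.image_singleton,
    stmt9_mono_eq, stmt9_mono_eq, stmt9_mono_eq]

lemma stmt9_Jab_eq (a b : ℕ) : Jab K a b = stmt9M K {stmt9E a 0, stmt9E 0 b} := by
  unfold Jab stmt9M
  rw [Set.image_insert_eq, Set.image_singleton, stmt9_mono_eq, stmt9_mono_eq]

lemma stmt9M_mono {s t : Set (Fin 2 →₀ ℕ)} (h : s ⊆ t) : stmt9M K s ≤ stmt9M K t :=
  Ideal.span_mono (Set.image_mono h)

/-- the crucial inclusion `I^{n+1} ⊆ J·I^n`, given one divisibility condition. -/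
lemma stmt9_pow_le (a b : ℕ) (w : Fin 2 →₀ ℕ) (n : ℕ)
    (hw : ∃ f ∈ ({stmt9E a 0, stmt9E 0 b} : Set (Fin 2 →₀ ℕ))
        + n • ({stmt9E a 0, stmt9E 0 b, w} : Set (Fin 2 →₀ ℕ)), f ≤ (n+1) • w) :
    stmt9M K ((n+1) • ({stmt9E a 0, stmt9E 0 b, w} : Set (Fin 2 →₀ ℕ)))
      ≤ stmt9M K ({stmt9E a 0, stmt9E 0 b} + n • {stmt9E a 0, stmt9E 0 b, w}) := by
  rw [stmt9M, Ideal.span_le]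
  rintro _ ⟨e, he, rfl⟩
  rw [SetLike.mem_coe, stmt9_monomial_mem]
  obtain ⟨i, j, k, hn, rfl⟩ := stmt9_mem_comb _ _ _ _ _ he
  rcases i with _ | i
  · rcases j with _ | j
    · obtain rfl : k = n + 1 := by omega
      simpa using hw
    · refine ⟨stmt9E 0 b + ((0:ℕ) • stmt9E a 0 + j • stmt9E 0 b + k • w), ?_, le_of_eq ?_⟩
      · exact Set.add_mem_add (by simp) (stmt9_comb_mem _ _ _ n 0 j k (by omega))
      · rw [succ_nsmul]; abel
  · refine ⟨stmt9E a 0 + (i • stmt9E a 0 + j • stmt9E 0 b + k • w), ?_, le_of_eq ?_⟩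
    · exact Set.add_mem_add (by simp) (stmt9_comb_mem _ _ _ n i j k (by omega))
    · rw [succ_nsmul]; abel

/-- the equality `I^{n+1} = J·I^n` given one divisibility condition. -/
lemma stmt9_red_eq (a b : ℕ) (w : Fin 2 →₀ ℕ) (n : ℕ)
    (hw : ∃ f ∈ ({stmt9E a 0, stmt9E 0 b} : Set (Fin 2 →₀ ℕ))
        + n • ({stmt9E a 0, stmt9E 0 b, w} : Set (Fin 2 →₀ ℕ)), f ≤ (n+1) • w) :
    stmt9M K ({stmt9E a 0, stmt9E 0 b, w}) ^ (n+1)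
      = Jab K a b * stmt9M K {stmt9E a 0, stmt9E 0 b, w} ^ n := by
  apply le_antisymm
  · rw [stmt9M_pow, stmt9M_pow, stmt9_Jab_eq, stmt9M_mul]
    exact stmt9_pow_le K a b w n hw
  · calc Jab K a b * stmt9M K {stmt9E a 0, stmt9E 0 b, w} ^ n
        ≤ stmt9M K {stmt9E a 0, stmt9E 0 b, w}
            * stmt9M K {stmt9E a 0, stmt9E 0 b, w} ^ n := by
          apply Ideal.mul_mono _ le_rfl
          rw [stmt9_Jab_eq]
          exact stmt9M_mono K (by intro x hx; rcases hx with rfl | rfl <;> simp)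
      _ = stmt9M K {stmt9E a 0, stmt9E 0 b, w} ^ (n+1) := (pow_succ' _ _).symm

/-- extraction: if `I^{n+1} = J·I^n` then any generator exponent of `I^{n+1}`
dominates some exponent of `J·I^n`. -/
lemma stmt9_extract (a b : ℕ) (w g : Fin 2 →₀ ℕ) (n : ℕ)
    (h : stmt9M K ({stmt9E a 0, stmt9E 0 b, w}) ^ (n+1)
        = Jab K a b * stmt9M K {stmt9E a 0, stmt9E 0 b, w} ^ n)
    (hg : g ∈ ((n+1) : ℕ) • ({stmt9E a 0, stmt9E 0 b, w} : Set (Fin 2 →₀ ℕ))) :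
    ∃ t ∈ ({stmt9E a 0, stmt9E 0 b} : Set (Fin 2 →₀ ℕ)), ∃ i j k : ℕ,
      i + j + k = n ∧ t + (i • stmt9E a 0 + j • stmt9E 0 b + k • w) ≤ g := by
  have h1 : monomial g (1:K) ∈ stmt9M K ({stmt9E a 0, stmt9E 0 b, w}) ^ (n+1) := by
    rw [stmt9M_pow]
    exact (stmt9_monomial_mem K g _).mpr ⟨g, hg, le_rfl⟩
  rw [h, stmt9_Jab_eq, stmt9M_pow, stmt9M_mul] at h1
  obtain ⟨f, hf, hle⟩ := (stmt9_monomial_mem K g _).mp h1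
  obtain ⟨t, ht, s, hs, rfl⟩ := Set.mem_add.mp hf
  obtain ⟨i, j, k, hn, rfl⟩ := stmt9_mem_comb _ _ _ _ _ hs
  exact ⟨t, ht, i, j, k, hn, hle⟩

end Aux

theorem stmt9 (K : Type*) [Field K] (a b : ℕ) (ha : 2 ≤ a) (hab : a ≤ b) :
    (Ideal.span {mono K a 0, mono K 0 b, mono K 1 (b - 1)} ^ a
        = Jab K a b * Ideal.span {mono K a 0, mono K 0 b, mono K 1 (b - 1)} ^ (a - 1)
      ∧ Ideal.span {mono K a 0, mono K 0 b, mono K 1 (b - 1)} ^ (a - 1)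
        ≠ Jab K a b * Ideal.span {mono K a 0, mono K 0 b, mono K 1 (b - 1)} ^ (a - 2))
    ∧ ∀ c d : ℕ, 0 < c → c < a → 0 < d → d < b → a * b ≤ b * c + a * d →
        (Ideal.span {mono K a 0, mono K 0 b, mono K c d} ^ 2
            = Jab K a b * Ideal.span {mono K a 0, mono K 0 b, mono K c d}
          ↔ a ≤ 2 * c ∧ b ≤ 2 * d) := by
  have hb : 2 ≤ b := le_trans ha hab
  have ha1 : a - 1 + 1 = a := by omega
  refine ⟨⟨?_, ?_⟩, ?_⟩
  · -- I^a = J·I^{a-1}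
    rw [stmt9_span3]
    have hw : ∃ f ∈ ({stmt9E a 0, stmt9E 0 b} : Set (Fin 2 →₀ ℕ))
        + (a-1) • ({stmt9E a 0, stmt9E 0 b, stmt9E 1 (b-1)} : Set (Fin 2 →₀ ℕ)),
        f ≤ ((a-1)+1) • stmt9E 1 (b-1) := by
      refine ⟨stmt9E a 0 + (a-1) • stmt9E 0 b, ?_, ?_⟩
      · refine Set.add_mem_add (by simp) ?_
        have := stmt9_comb_mem (stmt9E a 0) (stmt9E 0 b) (stmt9E 1 (b-1)) (a-1) 0 (a-1) 0
          (by omega)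
        simpa [zero_nsmul] using this
      · rw [ha1, stmt9E_smul, stmt9E_add, stmt9E_smul, stmt9E_le]
        constructor
        · omega
        · rw [zero_add, Nat.sub_one_mul, Nat.mul_sub_one]
          exact Nat.sub_le_sub_left hab _
    have := stmt9_red_eq K a b (stmt9E 1 (b-1)) (a-1) hw
    rw [ha1] at this
    exact this
  · -- I^{a-1} ≠ J·I^{a-2}
    rw [stmt9_span3]
    intro h
    have ha2 : a - 2 + 1 = a - 1 := by omega
    rw [← ha2] at h
    have hg : ((a-2+1) : ℕ) • stmt9E 1 (b-1)
        ∈ ((a-2+1) : ℕ) • ({stmt9E a 0, stmt9E 0 b, stmt9E 1 (b-1)} : Set (Fin 2 →₀ ℕ)) := by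
      have := stmt9_comb_mem (stmt9E a 0) (stmt9E 0 b) (stmt9E 1 (b-1)) (a-2+1) 0 0 (a-2+1) (by omega)
      simpa [zero_nsmul] using this
    obtain ⟨t, ht, i, j, k, hn, hle⟩ := stmt9_extract K a b (stmt9E 1 (b-1)) _ (a-2) h hg
    rw [stmt9E_smul] at hle
    rcases ht with rfl | rfl
    · rw [stmt9E_smul, stmt9E_smul, stmt9E_smul, stmt9E_add, stmt9E_add, stmt9E_add,
        stmt9E_le] at hle
      obtain ⟨hx, hy⟩ := hle
      have h2 : a ≤ (a - 2 + 1) * 1 := (Nat.le_add_right a _).trans hx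
      omega
    · rw [stmt9E_smul, stmt9E_smul, stmt9E_smul, stmt9E_add, stmt9E_add, stmt9E_add,
        stmt9E_le] at hle
      obtain ⟨hx, hy⟩ := hle
      simp only [mul_zero, zero_mul, zero_add, mul_one, add_zero] at hx hy
      have hi : i = 0 := by
        by_contra hi0
        have h1 : a ≤ i * a := Nat.le_mul_of_pos_left a (Nat.pos_of_ne_zero hi0)
        have h2 : i * a ≤ a - 2 + 1 := le_trans (Nat.le_add_right _ _) hx
        have := h1.trans h2
        omega
      subst hi
      simp only [zero_mul, zero_add] at hy hn
      have hj : (j:ℤ) = (a:ℤ) - 2 - (k:ℤ) := by omega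
      have hk : (k:ℤ) ≤ (a:ℤ) - 2 := by omega
      have hb1 : 1 ≤ b := by omega
      zify [hb1, ha] at hy
      have key : (b:ℤ) + ((j:ℤ) * b + (k:ℤ) * ((b:ℤ)-1)) = ((a:ℤ)-1) * b - (k:ℤ) := by
        rw [hj]; ring
      rw [key] at hy
      have exp : ((a:ℤ)-2+1) * ((b:ℤ)-1) = ((a:ℤ)-1) * b - ((a:ℤ)-1) := by ring
      rw [exp] at hy
      have : (a:ℤ) - 1 ≤ (k:ℤ) := by linarith
      linarith
  · intro c d hc0 hca hd0 hdb _
    rw [stmt9_span3]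
    constructor
    · intro h
      have h' : stmt9M K ({stmt9E a 0, stmt9E 0 b, stmt9E c d}) ^ (1+1)
          = Jab K a b * stmt9M K {stmt9E a 0, stmt9E 0 b, stmt9E c d} ^ 1 := by
        rw [pow_one]
        exact h
      have hg : ((1+1) : ℕ) • stmt9E c d
          ∈ ((1+1) : ℕ) • ({stmt9E a 0, stmt9E 0 b, stmt9E c d} : Set (Fin 2 →₀ ℕ)) := by
        have := stmt9_comb_mem (stmt9E a 0) (stmt9E 0 b) (stmt9E c d) (1+1) 0 0 (1+1) (by omega)
        simpa [zero_nsmul] using this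
      obtain ⟨t, ht, i, j, k, hn, hle⟩ := stmt9_extract K a b (stmt9E c d) _ 1 h' hg
      have hcase : (i = 1 ∧ j = 0 ∧ k = 0) ∨ (i = 0 ∧ j = 1 ∧ k = 0)
          ∨ (i = 0 ∧ j = 0 ∧ k = 1) := by omega
      rw [stmt9E_smul] at hle
      rcases ht with rfl | rfl <;>
        rcases hcase with ⟨rfl, rfl, rfl⟩ | ⟨rfl, rfl, rfl⟩ | ⟨rfl, rfl, rfl⟩ <;>
        · rw [stmt9E_smul, stmt9E_smul, stmt9E_smul, stmt9E_add, stmt9E_add, stmt9E_add,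
            stmt9E_le] at hle
          omega
    · rintro ⟨h1, h2⟩
      have hw : ∃ f ∈ ({stmt9E a 0, stmt9E 0 b} : Set (Fin 2 →₀ ℕ))
          + 1 • ({stmt9E a 0, stmt9E 0 b, stmt9E c d} : Set (Fin 2 →₀ ℕ)),
          f ≤ (1+1) • stmt9E c d := by
        refine ⟨stmt9E a 0 + stmt9E 0 b, Set.add_mem_add (by simp) (by rw [one_nsmul]; simp), ?_⟩
        rw [stmt9E_add, stmt9E_smul, stmt9E_le]
        omega
      have := stmt9_red_eq K a b (stmt9E c d) 1 hw
      rw [pow_one] at this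
      exact this
end

section
/- Let K be a field, a, b integers with 2 ≤ a ≤ b, and let p = (c,d) be a pair of integers with 0 < c < a, 0 < d < b and bc + ad = ab (an integer point strictly inside the segment from (a,0) to (0,b)). Let r be the reduction number of I_p = (x^a, y^b, x^c y^d) with respect to J = (x^a, y^b). Then: (a) if a does not divide b, then 2r < a; (b) r ≠ a − 2. -/
open MvPolynomial

/-!
Write `n` for the additive order of `c` in `ℤ/aℤ`, i.e. the least `n > 0` with `a ∣ n c`; we show
`r(I_p) = n - 1`. Since `(x^c y^d)^n = x^{ma} y^{(n-m)b}` with `nc = ma`, the power `(x^c y^d)^n`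
lies in `J I^{n-1}`, which gives `I^n = J I^{n-1}`. Conversely, `J I^r` is a monomial ideal, and if
`(x^c y^d)^{r+1}` is divisible by one of its generators `x^{ia+lc} y^{jb+ld}` (`i+j+l = r+1`,
`i+j ≥ 1`), then `ia ≤ (i+j)c` and `jb ≤ (i+j)d`; as `bc + ad = ab`, both are equalities, so
`a ∣ (i+j)c` and `n ≤ r+1`.

Finally `n` divides both `a` and `b` (as `a ∣ bc`) and `n ≠ 1`: if `a ∤ b` then `n` is a proper
divisor of `a`, so `2n ≤ a`; and `n = a - 1` would force `n ∣ 1`.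
-/

lemma ZMod.addOrderOf_natCast_dvd_iff {a c t : ℕ} :
    addOrderOf (c : ZMod a) ∣ t ↔ a ∣ t * c := by
  rw [addOrderOf_dvd_iff_nsmul_eq_zero, nsmul_eq_mul, ← Nat.cast_mul, ZMod.natCast_eq_zero_iff]

lemma ZMod.addOrderOf_natCast_dvd (a c : ℕ) : addOrderOf (c : ZMod a) ∣ a :=
  ZMod.addOrderOf_natCast_dvd_iff.2 (dvd_mul_right a c)

lemma Nat.two_mul_le_of_dvd_of_ne {n a : ℕ} (ha : 0 < a) (hna : n ∣ a) (hne : n ≠ a) :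
    2 * n ≤ a := by
  obtain ⟨q, rfl⟩ := hna
  rcases q with _ | _ | q
  · omega
  · exact absurd (mul_one n).symm hne
  · nlinarith

theorem Ideal.sup_pow_succ_le {R : Type*} [CommSemiring R] (J C : Ideal R) (n : ℕ) :
    (J ⊔ C) ^ (n + 1) ≤ J * (J ⊔ C) ^ n ⊔ C ^ (n + 1) := by
  induction n with
  | zero => simp
  | succ n ih =>
    rw [pow_succ]
    refine (Ideal.mul_mono_left ih).trans ?_
    rw [Ideal.sup_mul, mul_assoc, ← pow_succ]
    refine sup_le le_sup_left ?_
    rw [Ideal.mul_sup, ← pow_succ]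
    refine sup_le ?_ le_sup_right
    rw [mul_comm]
    exact (Ideal.mul_mono_right (Ideal.pow_right_mono le_sup_right _)).trans le_sup_left

theorem Ideal.sup_span_singleton_pow_succ_eq {R : Type*} [CommSemiring R] {J : Ideal R} {f : R}
    {n : ℕ} (hf : f ^ (n + 1) ∈ J * (J ⊔ Ideal.span {f}) ^ n) :
    (J ⊔ Ideal.span {f}) ^ (n + 1) = J * (J ⊔ Ideal.span {f}) ^ n := by
  refine le_antisymm ((Ideal.sup_pow_succ_le _ _ n).trans (sup_le le_rfl ?_)) ?_
  · rwa [Ideal.span_singleton_pow, Ideal.span_singleton_le_iff_mem]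
  · rw [pow_succ']
    exact Ideal.mul_mono_left le_sup_left

lemma redNum_eq_of_pow_succ_eq {K : Type*} [Field K] {a b n : ℕ}
    {I : Ideal (MvPolynomial (Fin 2) K)}
    (h : I ^ (n + 1) = Jab K a b * I ^ n) (hmin : ∀ r < n, I ^ (r + 1) ≠ Jab K a b * I ^ r) :
    redNum K a b I = n :=
  le_antisymm (Nat.sInf_le h) (le_csInf ⟨n, h⟩ fun r hr => not_lt.1 fun hlt => hmin r hlt hr)

noncomputable def monoExponent (c d : ℕ) : Fin 2 →₀ ℕ := Finsupp.single 0 c + Finsupp.single 1 d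

@[simp]
lemma monoExponent_apply_zero (c d : ℕ) : monoExponent c d 0 = c := by
  simp [monoExponent]

@[simp]
lemma monoExponent_apply_one (c d : ℕ) : monoExponent c d 1 = d := by
  simp [monoExponent]

lemma monoExponent_add (c d c' d' : ℕ) :
    monoExponent c d + monoExponent c' d' = monoExponent (c + c') (d + d') := by
  ext i; fin_cases i <;> simp

section Monomials

variable (K : Type*) [Field K]

lemma mono_eq_monomial (c d : ℕ) : mono K c d = monomial (monoExponent c d) 1 := by
  rw [mono, X_pow_eq_monomial, X_pow_eq_monomial, monomial_mul, one_mul, monoExponent]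

lemma mono_mul (c d c' d' : ℕ) : mono K c d * mono K c' d' = mono K (c + c') (d + d') := by
  simp only [mono]; ring

lemma mono_pow (c d n : ℕ) : mono K c d ^ n = mono K (n * c) (n * d) := by
  simp only [mono]; ring

end Monomials

section Exponents

variable {a b c d : ℕ}

lemma mul_eq_mul_of_exponent_le {i j l : ℕ} (hb : 0 < b) (h : b * c + a * d = a * b)
    (hx : i * a + l * c ≤ (i + j + l) * c) (hy : j * b + l * d ≤ (i + j + l) * d) :
    i * a = (i + j) * c := by
  have hx' : i * a ≤ (i + j) * c := by nlinarith
  have hy' : j * b ≤ (i + j) * d := by nlinarith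
  refine le_antisymm hx' (Nat.le_of_mul_le_mul_right ?_ hb)
  nlinarith [Nat.mul_le_mul_right a hy']

lemma exists_mul_eq_of_dvd_mul {t : ℕ} (hc : 0 < c) (hca : c < a) (h : b * c + a * d = a * b)
    (ht : 0 < t) (hdvd : a ∣ t * c) :
    ∃ m, 0 < m ∧ m ≤ t ∧ t * c = m * a ∧ t * d = (t - m) * b := by
  obtain ⟨m, hm⟩ := hdvd
  have hmt : m ≤ t := by nlinarith
  refine ⟨m, by nlinarith, hmt, by rw [hm, mul_comm], ?_⟩
  obtain ⟨s, rfl⟩ := Nat.exists_eq_add_of_le hmt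
  refine Nat.eq_of_mul_eq_mul_left (show 0 < a by omega) ?_
  rw [Nat.add_sub_cancel_left]
  nlinarith

end Exponents

def jMulPowExponents (a b c d r : ℕ) : Set (Fin 2 →₀ ℕ) :=
  {v | ∃ i j l : ℕ, i + j + l = r + 1 ∧ 0 < i + j ∧
    v = monoExponent (i * a + l * c) (j * b + l * d)}

section ReductionNumber

variable (K : Type*) [Field K] {a b c d : ℕ}

lemma span_mono_eq_Jab_sup (a b c d : ℕ) :
    Ideal.span {mono K a 0, mono K 0 b, mono K c d} = Jab K a b ⊔ Ideal.span {mono K c d} := by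
  rw [Jab, ← Ideal.span_union, Set.insert_union, Set.singleton_union]

lemma Jab_mul_pow_le_span_jMulPowExponents (a b c d r : ℕ) :
    Jab K a b * Ideal.span {mono K a 0, mono K 0 b, mono K c d} ^ r ≤
      Ideal.span ((fun v => monomial v (1 : K)) '' jMulPowExponents a b c d r) := by
  induction r with
  | zero =>
    rw [pow_zero, mul_one, Jab, Ideal.span_le, Set.pair_subset_iff, mono_eq_monomial,
      mono_eq_monomial]
    exact ⟨Ideal.subset_span ⟨_, ⟨1, 0, 0, rfl, one_pos, by simp⟩, rfl⟩,
      Ideal.subset_span ⟨_, ⟨0, 1, 0, rfl, one_pos, by simp⟩, rfl⟩⟩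
  | succ r ih =>
    have hI : Ideal.span {mono K a 0, mono K 0 b, mono K c d} =
        Ideal.span ((fun v => monomial v (1 : K)) ''
          {monoExponent a 0, monoExponent 0 b, monoExponent c d}) := by
      simp only [Set.image_insert_eq, Set.image_singleton, mono_eq_monomial]
    rw [pow_succ, ← mul_assoc]
    refine (Ideal.mul_mono_left ih).trans ?_
    rw [hI, Ideal.span_mul_span', Ideal.span_le]
    rintro _ ⟨_, ⟨v, ⟨i, j, l, hsum, hij, rfl⟩, rfl⟩, _, ⟨w, hw, rfl⟩, rfl⟩
    simp only [monomial_mul, one_mul]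
    refine Ideal.subset_span (Set.mem_image_of_mem _ ?_)
    simp only [Set.mem_insert_iff, Set.mem_singleton_iff] at hw
    rcases hw with rfl | rfl | rfl
    · exact ⟨i + 1, j, l, by omega, by omega, by rw [monoExponent_add]; ring_nf⟩
    · exact ⟨i, j + 1, l, by omega, by omega, by rw [monoExponent_add]; ring_nf⟩
    · exact ⟨i, j, l + 1, by omega, by omega, by rw [monoExponent_add]; ring_nf⟩

lemma mono_pow_mem_Jab_mul_pow {m t : ℕ} (hm : 0 < m) (hmt : m ≤ t) (hx : t * c = m * a)
    (hy : t * d = (t - m) * b) :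
    mono K c d ^ t ∈ Jab K a b * Ideal.span {mono K a 0, mono K 0 b, mono K c d} ^ (t - 1) := by
  obtain ⟨k, rfl⟩ := Nat.exists_eq_add_of_le' hm
  have hsplit : mono K c d ^ t = mono K a 0 * (mono K a 0 ^ k * mono K 0 b ^ (t - (k + 1))) := by
    rw [mono_pow, hx, hy, mono_pow, mono_pow, mono_mul, mono_mul]
    congr 1 <;> ring
  have hexp : t - 1 = k + (t - (k + 1)) := by omega
  rw [hsplit, hexp, pow_add]
  exact Ideal.mul_mem_mul (Ideal.subset_span (by simp)) (Ideal.mul_mem_mul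
    (Ideal.pow_mem_pow (Ideal.subset_span (by simp)) _)
    (Ideal.pow_mem_pow (Ideal.subset_span (by simp)) _))

lemma addOrderOf_le_of_pow_succ_eq (hb : 0 < b) (h : b * c + a * d = a * b) {r : ℕ}
    (hr : Ideal.span {mono K a 0, mono K 0 b, mono K c d} ^ (r + 1) =
      Jab K a b * Ideal.span {mono K a 0, mono K 0 b, mono K c d} ^ r) :
    addOrderOf (c : ZMod a) ≤ r + 1 := by
  have hmem : mono K c d ^ (r + 1) ∈ Ideal.span {mono K a 0, mono K 0 b, mono K c d} ^ (r + 1) :=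
    Ideal.pow_mem_pow (Ideal.subset_span (by simp)) _
  have hspan := Jab_mul_pow_le_span_jMulPowExponents K a b c d r (hr ▸ hmem)
  rw [mono_pow, mono_eq_monomial, mem_ideal_span_monomial_image] at hspan
  obtain ⟨_, ⟨i, j, l, hsum, hij, rfl⟩, hle⟩ :=
    hspan (monoExponent ((r + 1) * c) ((r + 1) * d)) (by simp)
  have hia := mul_eq_mul_of_exponent_le (i := i) (j := j) (l := l) hb h
    (by simpa [hsum] using hle 0) (by simpa [hsum] using hle 1)
  have hdvd : addOrderOf (c : ZMod a) ∣ i + j :=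
    ZMod.addOrderOf_natCast_dvd_iff.2 ⟨i, by rw [← hia, mul_comm]⟩
  exact (Nat.le_of_dvd hij hdvd).trans (by omega)

theorem redNum_span_mono_eq (hc : 0 < c) (hca : c < a) (hb : 0 < b)
    (h : b * c + a * d = a * b) :
    redNum K a b (Ideal.span {mono K a 0, mono K 0 b, mono K c d}) =
      addOrderOf (c : ZMod a) - 1 := by
  set n := addOrderOf (c : ZMod a)
  have hn : 0 < n :=
    Nat.pos_of_dvd_of_pos (ZMod.addOrderOf_natCast_dvd a c) (by omega)
  obtain ⟨m, hm, hmn, hx, hy⟩ :=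
    exists_mul_eq_of_dvd_mul hc hca h hn (ZMod.addOrderOf_natCast_dvd_iff.1 dvd_rfl)
  refine redNum_eq_of_pow_succ_eq ?_ fun r hr heq => by
    have := addOrderOf_le_of_pow_succ_eq K hb h heq
    omega
  rw [span_mono_eq_Jab_sup]
  refine Ideal.sup_span_singleton_pow_succ_eq ?_
  rw [Nat.sub_add_cancel hn, ← span_mono_eq_Jab_sup]
  exact mono_pow_mem_Jab_mul_pow K hm hmn hx hy

end ReductionNumber

theorem stmt10_general (K : Type*) [Field K] (a b c d : ℕ)
    (hc : 0 < c) (hca : c < a) (hdb : d < b)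
    (h : b * c + a * d = a * b) :
    (¬ a ∣ b →
        2 * redNum K a b (Ideal.span {mono K a 0, mono K 0 b, mono K c d}) < a)
    ∧ redNum K a b (Ideal.span {mono K a 0, mono K 0 b, mono K c d}) ≠ a - 2 := by
  rw [redNum_span_mono_eq K hc hca (by omega) h]
  set n := addOrderOf (c : ZMod a)
  have hna : n ∣ a := ZMod.addOrderOf_natCast_dvd a c
  have hnb : n ∣ b := ZMod.addOrderOf_natCast_dvd_iff.2
    ⟨b - d, by rw [Nat.mul_sub, ← h, Nat.add_sub_cancel]⟩
  have hn1 : n ≠ 1 := fun hn => by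
    have hac : a ∣ 1 * c := ZMod.addOrderOf_natCast_dvd_iff.1 (hn ▸ dvd_rfl : n ∣ 1)
    exact hca.not_ge (Nat.le_of_dvd hc (by rwa [one_mul] at hac))
  have hn : 0 < n := Nat.pos_of_dvd_of_pos hna (by omega)
  refine ⟨fun hndvd => ?_, fun hr => ?_⟩
  · have := Nat.two_mul_le_of_dvd_of_ne (by omega) hna fun hna' => hndvd (hna' ▸ hnb)
    omega
  · have hsub : n ∣ a - n := Nat.dvd_sub hna dvd_rfl
    rw [show a - n = 1 by omega, Nat.dvd_one] at hsub
    exact hn1 hsub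

theorem stmt10 (K : Type*) [Field K] (a b c d : ℕ) (ha : 2 ≤ a) (hab : a ≤ b)
    (hc : 0 < c) (hca : c < a) (hd : 0 < d) (hdb : d < b)
    (h : b * c + a * d = a * b) :
    (¬ a ∣ b →
        2 * redNum K a b (Ideal.span {mono K a 0, mono K 0 b, mono K c d}) < a)
    ∧ redNum K a b (Ideal.span {mono K a 0, mono K 0 b, mono K c d}) ≠ a - 2 :=
  stmt10_general K a b c d hc hca hdb h
end

section
/- Let K be a field, a, b positive integers, and let S be a set of monomials of K[x,y] containing x^a and y^b such that every x^c y^d ∈ S satisfies bc + ad ≥ ab. Let I be the ideal generated by S, let I_0 be the ideal generated by {x^c y^d ∈ S : bc + ad = ab} (the quasi-equigenerated part of I), and let J = (x^a, y^b). Then for every k ≥ 0, if I^{k+1} = J·I^k then I_0^{k+1} = J·I_0^k. In particular, the reduction number of I_0 with respect to J is at most the reduction number of I with respect to J. -/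
open MvPolynomial

namespace St13
noncomputable def ee (p : ℕ × ℕ) : Fin 2 →₀ ℕ :=
  Finsupp.single 0 p.1 + Finsupp.single 1 p.2
lemma ee_apply0 (p : ℕ × ℕ) : ee p 0 = p.1 := by simp [ee, Finsupp.single_apply]
lemma ee_apply1 (p : ℕ × ℕ) : ee p 1 = p.2 := by simp [ee, Finsupp.single_apply]
lemma ee_le_iff {p q : ℕ × ℕ} : ee p ≤ ee q ↔ p.1 ≤ q.1 ∧ p.2 ≤ q.2 := by
  constructor
  · intro h
    exact ⟨by simpa [ee_apply0] using h 0, by simpa [ee_apply1] using h 1⟩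
  · intro h i
    fin_cases i
    · simpa [ee_apply0] using h.1
    · simpa [ee_apply1] using h.2
lemma mono_eq (K : Type*) [Field K] (c d : ℕ) :
    mono K c d = monomial (ee (c, d)) (1 : K) := by
  rw [mono, X_pow_eq_monomial, X_pow_eq_monomial, monomial_mul, one_mul]; rfl

variable (K : Type*) [Field K]

/-- the monomial ideal with exponent set `T` -/
noncomputable def msp (T : Set (ℕ × ℕ)) : Ideal (MvPolynomial (Fin 2) K) :=
  Ideal.span ((fun p : ℕ × ℕ => mono K p.1 p.2) '' T)

lemma img_eq (T : Set (ℕ × ℕ)) :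
    (fun p : ℕ × ℕ => mono K p.1 p.2) '' T
      = (fun s => monomial s (1 : K)) '' (ee '' T) := by
  rw [Set.image_image]
  exact Set.image_congr fun p _ => mono_eq K p.1 p.2

lemma mono_mem_msp {T : Set (ℕ × ℕ)} {c d : ℕ} :
    mono K c d ∈ msp K T ↔ ∃ q ∈ T, q.1 ≤ c ∧ q.2 ≤ d := by
  classical
  rw [msp, img_eq, mem_ideal_span_monomial_image, mono_eq]
  rw [support_monomial, if_neg (one_ne_zero : (1:K) ≠ 0)]
  constructor
  · intro h
    obtain ⟨si, hsi, hle⟩ := h (ee (c, d)) (Finset.mem_singleton_self _)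
    obtain ⟨q, hq, rfl⟩ := hsi
    exact ⟨q, hq, ee_le_iff.mp hle⟩
  · rintro ⟨q, hq, h1, h2⟩ xi hxi
    rw [Finset.mem_singleton] at hxi
    subst hxi
    exact ⟨ee q, ⟨q, hq, rfl⟩, ee_le_iff.mpr ⟨h1, h2⟩⟩

lemma msp_le_iff {T1 T2 : Set (ℕ × ℕ)} :
    msp K T1 ≤ msp K T2 ↔ ∀ p ∈ T1, ∃ q ∈ T2, q.1 ≤ p.1 ∧ q.2 ≤ p.2 := by
  constructor
  · intro h p hp
    exact (mono_mem_msp K).mp (h (Ideal.subset_span ⟨p, hp, rfl⟩))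
  · intro h
    rw [msp, Ideal.span_le]
    rintro _ ⟨p, hp, rfl⟩
    exact (mono_mem_msp K).mpr (h p hp)

lemma mono_add (p q : ℕ × ℕ) :
    mono K (p + q).1 (p + q).2 = mono K p.1 p.2 * mono K q.1 q.2 := by
  simp only [mono, Prod.fst_add, Prod.snd_add, pow_add]; ring

lemma msp_mul (T1 T2 : Set (ℕ × ℕ)) :
    msp K T1 * msp K T2 = msp K (Set.image2 (· + ·) T1 T2) := by
  rw [msp, msp, msp, Ideal.span_mul_span']
  congr 1
  ext f
  constructor
  · rintro hf
    rw [Set.mem_mul] at hf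
    obtain ⟨x, hx, y, hy, rfl⟩ := hf
    obtain ⟨p, hp, rfl⟩ := hx
    obtain ⟨q, hq, rfl⟩ := hy
    exact ⟨p + q, Set.mem_image2_of_mem hp hq, (by simpa using mono_add K p q)⟩
  · rintro ⟨r, hr, rfl⟩
    obtain ⟨p, hp, q, hq, rfl⟩ := hr
    rw [Set.mem_mul]
    exact ⟨_, ⟨p, hp, rfl⟩, _, ⟨q, hq, rfl⟩, (by simpa using (mono_add K p q).symm)⟩

/-- sums of `n` elements of `S` -/
def sums (S : Set (ℕ × ℕ)) (n : ℕ) : Set (ℕ × ℕ) :=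
  {p | ∃ l : List (ℕ × ℕ), l.length = n ∧ (∀ q ∈ l, q ∈ S) ∧ l.sum = p}

lemma sums_zero (S : Set (ℕ × ℕ)) : sums S 0 = {0} := by
  ext p
  constructor
  · rintro ⟨l, hl, -, rfl⟩
    rw [List.length_eq_zero_iff] at hl
    simp [hl]
  · rintro rfl
    exact ⟨[], rfl, by simp, rfl⟩

lemma sums_succ (S : Set (ℕ × ℕ)) (n : ℕ) :
    sums S (n + 1) = Set.image2 (· + ·) S (sums S n) := by
  ext p
  constructor
  · rintro ⟨l, hl, hmem, rfl⟩
    cases l with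
    | nil => simp at hl
    | cons q l =>
      refine ⟨q, hmem q (List.mem_cons_self), l.sum,
        ⟨l, by simpa using hl, fun r hr => hmem r (List.mem_cons_of_mem _ hr), rfl⟩, by simp⟩
  · rintro ⟨q, hq, s, ⟨l, hl, hmem, rfl⟩, rfl⟩
    exact ⟨q :: l, by simp [hl], by
      intro r hr
      rcases List.mem_cons.mp hr with rfl | hr
      · exact hq
      · exact hmem r hr, by simp⟩

lemma msp_pow (S : Set (ℕ × ℕ)) (n : ℕ) : msp K S ^ n = msp K (sums S n) := by
  induction n with
  | zero =>
      rw [pow_zero, sums_zero]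
      rw [msp, Set.image_singleton]
      have : mono K (0:ℕ×ℕ).1 (0:ℕ×ℕ).2 = 1 := by simp [mono]
      rw [this, Ideal.span_singleton_one, Ideal.one_eq_top]
  | succ n ih =>
      rw [pow_succ, ih, msp_mul, sums_succ]
      congr 1
      ext p
      rw [Set.mem_image2, Set.mem_image2]
      constructor
      · rintro ⟨s, hs, q, hq, rfl⟩
        exact ⟨q, hq, s, hs, by rw [add_comm]⟩
      · rintro ⟨q, hq, s, hs, rfl⟩
        exact ⟨s, hs, q, hq, by rw [add_comm]⟩


/-! combinatorial layer -/

/-- weight -/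
def w (a b : ℕ) (p : ℕ × ℕ) : ℕ := b * p.1 + a * p.2

def E (a b : ℕ) : Set (ℕ × ℕ) := {(a, 0), (0, b)}

variable {a b : ℕ}

lemma w_add (p q : ℕ × ℕ) : w a b (p + q) = w a b p + w a b q := by
  simp only [w, Prod.fst_add, Prod.snd_add]; ring

lemma w_zero : w a b 0 = 0 := by simp [w]

lemma w_sum_le {m : List (ℕ × ℕ)} (h : ∀ q ∈ m, a * b ≤ w a b q) :
    m.length * (a * b) ≤ w a b m.sum := by
  induction m with
  | nil => simp [w_zero]
  | cons q m ih =>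
      rw [List.sum_cons, w_add, List.length_cons, add_mul, one_mul, add_comm (m.length * (a*b))]
      exact Nat.add_le_add (h q (List.mem_cons_self))
        (ih fun r hr => h r (List.mem_cons_of_mem _ hr))

lemma w_sum_eq {m : List (ℕ × ℕ)} (h : ∀ q ∈ m, w a b q = a * b) :
    w a b m.sum = m.length * (a * b) := by
  induction m with
  | nil => simp [w_zero]
  | cons q m ih =>
      rw [List.sum_cons, w_add, List.length_cons, add_mul, one_mul, add_comm (m.length * (a*b))]
      rw [h q (List.mem_cons_self), ih fun r hr => h r (List.mem_cons_of_mem _ hr)]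

lemma w_all_eq {m : List (ℕ × ℕ)} (h : ∀ q ∈ m, a * b ≤ w a b q)
    (hs : w a b m.sum = m.length * (a * b)) : ∀ q ∈ m, w a b q = a * b := by
  induction m with
  | nil => simp
  | cons q m ih =>
      rw [List.sum_cons, w_add, List.length_cons, add_mul, one_mul] at hs
      have h1 : a * b ≤ w a b q := h q (List.mem_cons_self)
      have h2 : m.length * (a * b) ≤ w a b m.sum :=
        w_sum_le fun r hr => h r (List.mem_cons_of_mem _ hr)
      have hq : w a b q = a * b := by omega
      have hm : w a b m.sum = m.length * (a * b) := by omega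
      intro r hr
      rcases List.mem_cons.mp hr with rfl | hr
      · exact hq
      · exact ih (fun r hr => h r (List.mem_cons_of_mem _ hr)) hm r hr

/-- the reduction property, combinatorially -/
def Red (a b : ℕ) (S : Set (ℕ × ℕ)) (k : ℕ) : Prop :=
  ∀ p ∈ sums S (k + 1),
    ∃ q ∈ Set.image2 (· + ·) (E a b) (sums S k), q.1 ≤ p.1 ∧ q.2 ≤ p.2

lemma w_E (ha : 0 < a) (hb : 0 < b) {e : ℕ × ℕ} (he : e ∈ E a b) : w a b e = a * b := by
  rcases he with rfl | rfl
  · simp [w]; ring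
  · simp [w]

/-- slice: the reduction property passes to the minimal-weight part -/
lemma slice (ha : 0 < a) (hb : 0 < b) {S : Set (ℕ × ℕ)}
    (hS : ∀ p ∈ S, a * b ≤ w a b p) {k : ℕ} (h : Red a b S k) :
    Red a b {p ∈ S | w a b p = a * b} k := by
  intro p hp
  obtain ⟨l, hlen, hmem, rfl⟩ := hp
  have hp' : l.sum ∈ sums S (k + 1) :=
    ⟨l, hlen, fun q hq => (hmem q hq).1, rfl⟩
  obtain ⟨q, hq, hle1, hle2⟩ := h _ hp'
  obtain ⟨e, he, s, hs, rfl⟩ := hq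
  obtain ⟨m, hmlen, hmS, rfl⟩ := hs
  have hwp : w a b l.sum = (k + 1) * (a * b) := by
    rw [w_sum_eq (fun q hq => (hmem q hq).2), hlen]
  have hwm : k * (a * b) ≤ w a b m.sum := by
    rw [← hmlen]
    exact w_sum_le fun r hr => hS r (hmS r hr)
  have hwe : w a b e = a * b := w_E ha hb he
  -- weight of e + m.sum vs l.sum
  have hwle : w a b (e + m.sum) ≤ w a b l.sum := by
    simp only [w]
    have := Nat.mul_le_mul_left b hle1
    have := Nat.mul_le_mul_left a hle2
    simp only [Prod.fst_add, Prod.snd_add] at *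
    omega
  rw [w_add, hwe] at hwle
  have hwm' : w a b m.sum = k * (a * b) := by
    have : (k + 1) * (a * b) = k * (a * b) + a * b := by ring
    omega
  -- equality of components
  have hcomp : (e + m.sum).1 = l.sum.1 ∧ (e + m.sum).2 = l.sum.2 := by
    have hw1 : w a b (e + m.sum) = w a b l.sum := by
      rw [w_add, hwe, hwm', hwp]; ring
    simp only [w] at hw1
    have hb1 : b * (e + m.sum).1 ≤ b * l.sum.1 := Nat.mul_le_mul_left b hle1
    have ha2 : a * (e + m.sum).2 ≤ a * l.sum.2 := Nat.mul_le_mul_left a hle2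
    have e1 : b * (e + m.sum).1 = b * l.sum.1 := by omega
    have e2 : a * (e + m.sum).2 = a * l.sum.2 := by omega
    exact ⟨Nat.eq_of_mul_eq_mul_left hb e1, Nat.eq_of_mul_eq_mul_left ha e2⟩
  have hms0 : m.sum ∈ sums {p ∈ S | w a b p = a * b} k := by
    refine ⟨m, hmlen, fun r hr => ⟨hmS r hr, ?_⟩, rfl⟩
    refine w_all_eq (fun r hr => hS r (hmS r hr)) ?_ r hr
    rw [hwm', hmlen]
  exact ⟨e + m.sum, Set.mem_image2_of_mem he hms0, le_of_eq hcomp.1, le_of_eq hcomp.2⟩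

lemma replicate_sum (n : ℕ) (p : ℕ × ℕ) :
    (List.replicate n p).sum = (n * p.1, n * p.2) := by
  induction n with
  | zero => simp [Prod.ext_iff]
  | succ n ih =>
      rw [List.replicate_succ, List.sum_cons, ih, Prod.ext_iff]
      simp only [Prod.fst_add, Prod.snd_add, Prod.mk.injEq]
      constructor <;> ring

/-- key pigeonhole step: covering a block whose coordinates are divisible -/
lemma exists_red (ha : 0 < a) (hb : 0 < b) {S : Set (ℕ × ℕ)}
    (hxa : (a, 0) ∈ S) (hyb : (0, b) ∈ S) (hS : ∀ p ∈ S, a * b ≤ w a b p) :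
    Red a b S (a * b - 1) := by
  intro p hp
  obtain ⟨l, hlen, hl, rfl⟩ := hp
  have hab : 0 < a * b := Nat.mul_pos ha hb
  have hlen' : l.length = a * b := by omega
  -- pigeonhole on residues of partial sums
  have hpig : ∃ t1 ∈ Finset.range (a * b + 1), ∃ t2 ∈ Finset.range (a * b + 1),
      t1 ≠ t2 ∧ ((l.take t1).sum.1 % a, (l.take t1).sum.2 % b)
        = ((l.take t2).sum.1 % a, (l.take t2).sum.2 % b) := by
    apply Finset.exists_ne_map_eq_of_card_lt_of_maps_to
      (t := Finset.range a ×ˢ Finset.range b)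
    · simp only [Finset.card_range, Finset.card_product]
      omega
    · intro t _
      rw [Finset.mem_coe, Finset.mem_product, Finset.mem_range, Finset.mem_range]
      exact ⟨Nat.mod_lt _ ha, Nat.mod_lt _ hb⟩
  -- reduce to ordered pair
  have key : ∀ t1 t2 : ℕ, t1 < t2 → t2 ≤ a * b →
      ((l.take t1).sum.1 % a, (l.take t1).sum.2 % b)
        = ((l.take t2).sum.1 % a, (l.take t2).sum.2 % b) →
      ∃ q ∈ Set.image2 (· + ·) (E a b) (sums S (a * b - 1)),
        q.1 ≤ l.sum.1 ∧ q.2 ≤ l.sum.2 := by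
    intro t1 t2 hlt ht2 hf
    set mid := (l.drop t1).take (t2 - t1) with hmid
    have htake : l.take t2 = l.take t1 ++ mid := by
      rw [hmid, ← List.take_add]
      congr 1
      omega
    set A := (l.take t1).sum with hA
    set M := mid.sum with hM
    set D := (l.drop t2).sum with hD
    have hsum2 : (l.take t2).sum = A + M := by rw [htake, List.sum_append]
    have hlsum : l.sum = A + M + D := by
      conv_lhs => rw [← List.take_append_drop t2 l]
      rw [List.sum_append, hsum2]
    -- divisibility
    have hdvd1 : a ∣ M.1 := by
      have h0 := congrArg Prod.fst hf
      simp only [hsum2, Prod.fst_add] at h0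
      have hmod : A.1 ≡ A.1 + M.1 [MOD a] := h0
      have := (Nat.modEq_iff_dvd' (Nat.le_add_right _ _)).mp hmod
      simpa using this
    have hdvd2 : b ∣ M.2 := by
      have h0 := congrArg Prod.snd hf
      simp only [hsum2, Prod.snd_add] at h0
      have hmod : A.2 ≡ A.2 + M.2 [MOD b] := h0
      have := (Nat.modEq_iff_dvd' (Nat.le_add_right _ _)).mp hmod
      simpa using this
    obtain ⟨u, hu⟩ := hdvd1
    obtain ⟨v, hv⟩ := hdvd2
    set n := t2 - t1 with hn
    have hn1 : 1 ≤ n := by omega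
    have hmidlen : mid.length = n := by
      rw [hmid, List.length_take, List.length_drop, hlen']
      omega
    have hmidS : ∀ q ∈ mid, q ∈ S := fun q hq =>
      hl q (List.drop_subset _ _ (List.take_subset _ _ hq))
    have hwM : n * (a * b) ≤ w a b M := by
      rw [← hmidlen]
      exact w_sum_le fun r hr => hS r (hmidS r hr)
    have huv : n ≤ u + v := by
      have : w a b M = (a * b) * (u + v) := by
        simp only [w, hu, hv]; ring
      rw [this] at hwM
      exact Nat.le_of_mul_le_mul_left
        (le_trans (le_of_eq (Nat.mul_comm (a * b) n)) hwM) hab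
    -- choose e, i, j
    obtain ⟨e, i, j, he, hij, hi, hj⟩ :
        ∃ (e : ℕ × ℕ) (i j : ℕ), e ∈ E a b ∧ i + j = n - 1 ∧
          e.1 + i * a ≤ M.1 ∧ e.2 + j * b ≤ M.2 := by
      rcases Nat.eq_zero_or_pos u with hu0 | hu1
      · -- u = 0, so v ≥ n
        refine ⟨(0, b), 0, n - 1, Or.inr rfl, by omega, by simp, ?_⟩
        have hvn : n ≤ v := by omega
        have : b + (n - 1) * b = n * b := by
          obtain ⟨n', hn'⟩ : ∃ n', n = n' + 1 := ⟨n - 1, by omega⟩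
          rw [hn']
          simp only [Nat.add_sub_cancel]
          ring
        simp only [this, hv]
        calc n * b ≤ v * b := Nat.mul_le_mul_right b hvn
          _ = b * v := Nat.mul_comm _ _
      · refine ⟨(a, 0), min u n - 1, n - min u n, Or.inl rfl, by omega, ?_, ?_⟩
        · have hmin1 : 1 ≤ min u n := le_min hu1 hn1
          have : a + (min u n - 1) * a = min u n * a := by
            obtain ⟨m', hm'⟩ : ∃ m', min u n = m' + 1 := ⟨min u n - 1, by omega⟩
            rw [hm']
            simp only [Nat.add_sub_cancel]
            ring
          rw [this, hu]
          calc min u n * a ≤ u * a := Nat.mul_le_mul_right a (min_le_left _ _)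
            _ = a * u := Nat.mul_comm _ _
        · simp only [Prod.snd]
          have hjv : n - min u n ≤ v := by omega
          rw [hv]
          calc 0 + (n - min u n) * b ≤ v * b := by
                rw [Nat.zero_add]; exact Nat.mul_le_mul_right b hjv
            _ = b * v := Nat.mul_comm _ _
    -- build the list s
    set s : List (ℕ × ℕ) :=
      List.replicate i (a, 0) ++ List.replicate j (0, b) ++ (l.take t1 ++ l.drop t2) with hs
    have hsS : ∀ q ∈ s, q ∈ S := by
      intro q hq
      rw [hs] at hq
      simp only [List.mem_append] at hq
      rcases hq with (hq | hq) | (hq | hq)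
      · rw [List.eq_of_mem_replicate hq]; exact hxa
      · rw [List.eq_of_mem_replicate hq]; exact hyb
      · exact hl q (List.take_subset _ _ hq)
      · exact hl q (List.drop_subset _ _ hq)
    have hslen : s.length = a * b - 1 := by
      rw [hs]
      simp only [List.length_append, List.length_replicate, List.length_take,
        List.length_drop, hlen']
      omega
    have hssum : s.sum = (i * a, 0) + (0, j * b) + (A + D) := by
      rw [hs]
      simp only [List.sum_append, replicate_sum]
      simp [Prod.ext_iff, hA, hD]
    refine ⟨e + s.sum, Set.mem_image2_of_mem he ⟨s, hslen, hsS, rfl⟩, ?_, ?_⟩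
    · simp only [hssum, hlsum, Prod.fst_add]
      omega
    · simp only [hssum, hlsum, Prod.snd_add]
      omega
  obtain ⟨t1, ht1, t2, ht2, hne, hf⟩ := hpig
  rw [Finset.mem_range] at ht1 ht2
  rcases Nat.lt_or_gt_of_ne hne with h | h
  · exact key t1 t2 h (by omega) hf
  · exact key t2 t1 h (by omega) hf.symm


lemma Jab_eq (a b : ℕ) : Jab K a b = msp K (E a b) := by
  rw [Jab, msp, E, Set.image_insert_eq, Set.image_singleton]

lemma red_iff {S : Set (ℕ × ℕ)} (hxa : (a, 0) ∈ S) (hyb : (0, b) ∈ S) (k : ℕ) :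
    msp K S ^ (k + 1) = Jab K a b * msp K S ^ k ↔ Red a b S k := by
  rw [Jab_eq, msp_pow, msp_pow, msp_mul]
  constructor
  · intro h
    exact (msp_le_iff K).mp (le_of_eq h)
  · intro h
    refine le_antisymm ((msp_le_iff K).mpr h) ((msp_le_iff K).mpr ?_)
    rintro p ⟨e, he, s, hs, rfl⟩
    have heS : e ∈ S := by
      rcases he with rfl | rfl
      · exact hxa
      · exact hyb
    refine ⟨e + s, ?_, le_refl _, le_refl _⟩
    rw [sums_succ]
    exact Set.mem_image2_of_mem heS hs

end St13

open St13 in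
theorem stmt13 (K : Type*) [Field K] (a b : ℕ) (ha : 0 < a) (hb : 0 < b)
    (S : Set (ℕ × ℕ)) (hxa : (a, 0) ∈ S) (hyb : (0, b) ∈ S)
    (hS : ∀ p ∈ S, a * b ≤ b * p.1 + a * p.2) :
    (∀ k : ℕ,
        Ideal.span ((fun p : ℕ × ℕ => mono K p.1 p.2) '' S) ^ (k + 1)
            = Jab K a b * Ideal.span ((fun p : ℕ × ℕ => mono K p.1 p.2) '' S) ^ k →
        Ideal.span ((fun p : ℕ × ℕ => mono K p.1 p.2) ''
              {p ∈ S | b * p.1 + a * p.2 = a * b}) ^ (k + 1)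
            = Jab K a b *
              Ideal.span ((fun p : ℕ × ℕ => mono K p.1 p.2) ''
                {p ∈ S | b * p.1 + a * p.2 = a * b}) ^ k)
    ∧ redNum K a b (Ideal.span ((fun p : ℕ × ℕ => mono K p.1 p.2) ''
          {p ∈ S | b * p.1 + a * p.2 = a * b}))
        ≤ redNum K a b (Ideal.span ((fun p : ℕ × ℕ => mono K p.1 p.2) '' S)) := by
  have hS' : ∀ p ∈ S, a * b ≤ w a b p := hS
  have hxa0 : ((a, 0) : ℕ × ℕ) ∈ {p ∈ S | b * p.1 + a * p.2 = a * b} := ⟨hxa, by ring⟩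
  have hyb0 : ((0, b) : ℕ × ℕ) ∈ {p ∈ S | b * p.1 + a * p.2 = a * b} := ⟨hyb, by ring⟩
  have hsame : {p ∈ S | b * p.1 + a * p.2 = a * b} = {p ∈ S | w a b p = a * b} := rfl
  have part1 : ∀ k : ℕ,
      msp K S ^ (k + 1) = Jab K a b * msp K S ^ k →
      msp K {p ∈ S | b * p.1 + a * p.2 = a * b} ^ (k + 1)
        = Jab K a b * msp K {p ∈ S | b * p.1 + a * p.2 = a * b} ^ k := by
    intro k hk
    refine (red_iff K hxa0 hyb0 k).mpr ?_
    rw [hsame]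
    exact slice ha hb hS' ((red_iff K hxa hyb k).mp hk)
  refine ⟨part1, ?_⟩
  have hmem : (a * b - 1) ∈ {r : ℕ | msp K S ^ (r + 1) = Jab K a b * msp K S ^ r} :=
    (red_iff K hxa hyb _).mpr (exists_red ha hb hxa hyb hS')
  have hInf := Nat.sInf_mem ⟨_, hmem⟩
  exact Nat.sInf_le (part1 _ hInf)
end

section
/- Let K be a field, a, b positive integers with a ≤ b and g = gcd(a,b), let A be a set with {0,g} ⊆ A ⊆ {0,1,…,g}, and let ρ be a real number with ρ ≥ 1. Let I' be the ideal of K[x,y] generated by all monomials x^c y^d with bc + ad > ρ·ab, let I = I_A + I', and let J = (x^a, y^b). Then: (a) if I_A = J (i.e. A = {0,g}), then I² = J·I; (b) if I_A ≠ J, then the reduction number of I with respect to J equals the reduction number of I_A with respect to J. -/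
open MvPolynomial

/-!
Give `x` weight `b` and `y` weight `a`. The generators of `J` and of `I_A` all have weight `ab`,
and `I'` is spanned by the monomials of weight `> ρab ≥ ab`. A monomial of weight `≥ 2ab` is
divisible by `x^a` or `y^b`; hence `I_A I' ⊆ J I'` and `I'^2 ⊆ J I'`, which gives
`I^(n+1) = I_A^(n+1) + J^n I'`. Therefore `I^(n+2) = J I^(n+1)` iff
`I_A^(n+2) ⊆ J I_A^(n+1) + J^(n+1) I'`, and the last summand can be dropped because its
monomials have weight `> (n+2)ab`, the weight of every generator of `I_A^(n+2)`.
-/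

open scoped Pointwise

namespace MvPolynomial

variable {σ : Type*} (R : Type*) [CommSemiring R]

noncomputable def monomialIdeal (S : Set (σ →₀ ℕ)) : Ideal (MvPolynomial σ R) :=
  Ideal.span ((fun s => monomial s (1 : R)) '' S)

variable {R} {S T U : Set (σ →₀ ℕ)}

theorem monomial_mem_monomialIdeal_iff [Nontrivial R] {m : σ →₀ ℕ} :
    monomial m (1 : R) ∈ monomialIdeal R S ↔ ∃ s ∈ S, s ≤ m := by
  classical
  simp [monomialIdeal, mem_ideal_span_monomial_image, support_monomial]

theorem monomialIdeal_le_iff [Nontrivial R] :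
    monomialIdeal R S ≤ monomialIdeal R T ↔ ∀ s ∈ S, ∃ t ∈ T, t ≤ s := by
  rw [monomialIdeal, Ideal.span_le, Set.image_subset_iff]
  exact forall₂_congr fun _ _ => monomial_mem_monomialIdeal_iff

theorem monomialIdeal_mono (h : S ⊆ T) : monomialIdeal R S ≤ monomialIdeal R T :=
  Ideal.span_mono (Set.image_mono h)

theorem monomialIdeal_union :
    monomialIdeal R (S ∪ T) = monomialIdeal R S ⊔ monomialIdeal R T := by
  rw [monomialIdeal, Set.image_union, Ideal.span_union]; rfl

theorem monomialIdeal_add : monomialIdeal R (S + T) = monomialIdeal R S * monomialIdeal R T := by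
  rw [monomialIdeal, monomialIdeal, monomialIdeal, Ideal.span_mul_span', ← Set.image2_mul,
    ← Set.image2_add, Set.image_image2, Set.image2_image_left, Set.image2_image_right]
  simp only [monomial_mul, one_mul]

theorem monomialIdeal_nsmul (n : ℕ) : monomialIdeal R (n • S) = monomialIdeal R S ^ n := by
  induction n with
  | zero => simp [monomialIdeal]
  | succ n ih => rw [succ_nsmul, pow_succ, monomialIdeal_add, ih]

theorem monomialIdeal_le_of_le_sup [Nontrivial R] (hST : ∀ s ∈ S, ∀ t ∈ T, ¬t ≤ s)
    (h : monomialIdeal R S ≤ monomialIdeal R U ⊔ monomialIdeal R T) :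
    monomialIdeal R S ≤ monomialIdeal R U := by
  rw [← monomialIdeal_union, monomialIdeal_le_iff] at h
  refine monomialIdeal_le_iff.mpr fun s hs => ?_
  obtain ⟨t, ht | ht, hts⟩ := h s hs
  exacts [⟨t, ht, hts⟩, absurd hts (hST s hs t ht)]

end MvPolynomial

theorem Finsupp.weight_mono {σ : Type*} (w : σ → ℕ) {s t : σ →₀ ℕ} (h : s ≤ t) :
    weight w s ≤ weight w t := by
  obtain ⟨u, rfl⟩ := le_iff_exists_add.mp h
  simp

theorem Finsupp.weight_eq_of_mem_nsmul {σ : Type*} {w : σ → ℕ} {S : Set (σ →₀ ℕ)}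
    {k : ℕ} (hS : ∀ s ∈ S, weight w s = k) (n : ℕ) :
    ∀ s ∈ n • S, weight w s = n * k := by
  induction n with
  | zero => simp
  | succ n ih =>
    rintro _ ⟨s, hs, t, ht, rfl⟩
    rw [map_add, ih s hs, hS t ht]; ring

namespace Ideal

variable {R : Type*} [CommSemiring R] {I J A P : Ideal R}

theorem pow_mul_le_pow_mul_of_mul_le (h : I * P ≤ J * P) (n : ℕ) : I ^ n * P ≤ J ^ n * P := by
  induction n with
  | zero => simp
  | succ n ih =>
    calc I ^ (n + 1) * P = I ^ n * (I * P) := by ring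
      _ ≤ I ^ n * (J * P) := mul_mono_right h
      _ = J * (I ^ n * P) := by ring
      _ ≤ J * (J ^ n * P) := mul_mono_right ih
      _ = J ^ (n + 1) * P := by ring

section

variable (hJA : J ≤ A) (hAP : A * P ≤ J * P) (hPP : P * P ≤ J * P)
include hJA hAP hPP

theorem add_pow_succ_eq (n : ℕ) : (A + P) ^ (n + 1) = A ^ (n + 1) + J ^ n * P := by
  have hIP : (A + P) * P ≤ J * P := by rw [add_mul, add_eq_sup]; exact sup_le hAP hPP
  induction n with
  | zero => simp
  | succ n ih =>
    apply le_antisymm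
    · calc (A + P) ^ (n + 2) = A ^ (n + 2) + J ^ n * (A * P) + (A + P) ^ (n + 1) * P := by
            rw [pow_succ, mul_add, ih]; ring
        _ ≤ A ^ (n + 2) + J ^ n * (J * P) + J ^ (n + 1) * P :=
            add_le_add (add_le_add le_rfl (mul_mono_right hAP))
              (pow_mul_le_pow_mul_of_mul_le hIP _)
        _ = A ^ (n + 2) + J ^ (n + 1) * P := by
            rw [← mul_assoc, ← pow_succ, add_assoc, add_idem]
    · rw [add_eq_sup, add_eq_sup, sup_le_iff]
      refine ⟨pow_right_mono le_sup_left _, ?_⟩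
      rw [pow_succ (A ⊔ P)]
      exact mul_mono (pow_right_mono (hJA.trans le_sup_left) _) le_sup_right

theorem add_pow_succ_succ_eq_mul_iff (n : ℕ) :
    (A + P) ^ (n + 2) = J * (A + P) ^ (n + 1) ↔
      A ^ (n + 2) ≤ J * A ^ (n + 1) + J ^ (n + 1) * P := by
  have hJI : J * (A + P) ^ (n + 1) = J * A ^ (n + 1) + J ^ (n + 1) * P := by
    rw [add_pow_succ_eq hJA hAP hPP, pow_succ']; ring
  rw [hJI, add_pow_succ_eq hJA hAP hPP]
  constructor
  · intro h; rw [← h]; exact le_sup_left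
  · intro h
    refine le_antisymm ?_ (add_le_add_left ?_ _)
    · rw [add_eq_sup, add_eq_sup, sup_le_iff]
      exact ⟨h, le_sup_right⟩
    · rw [pow_succ' A (n + 1)]
      exact mul_mono_left hJA

end

end Ideal

namespace BivariateReduction

open Finsupp

noncomputable def expVec (c d : ℕ) : Fin 2 →₀ ℕ := single 0 c + single 1 d

@[simp] theorem expVec_apply_zero (c d : ℕ) : expVec c d 0 = c := by simp [expVec]

@[simp] theorem expVec_apply_one (c d : ℕ) : expVec c d 1 = d := by simp [expVec]

theorem expVec_le_iff {c d : ℕ} {s : Fin 2 →₀ ℕ} :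
    expVec c d ≤ s ↔ c ≤ s 0 ∧ d ≤ s 1 := by
  simp [Finsupp.le_def, Fin.forall_fin_two]

theorem mono_eq_monomial (K : Type*) [Field K] (c d : ℕ) :
    mono K c d = monomial (expVec c d) 1 := by
  rw [mono, X_pow_eq_monomial, X_pow_eq_monomial, monomial_mul, one_mul, expVec]

theorem weight_eq_mul_add_mul (a b : ℕ) (s : Fin 2 →₀ ℕ) :
    weight ![b, a] s = b * s 0 + a * s 1 := by
  simp [weight_eq_sum, Fin.sum_univ_two, mul_comm]

noncomputable def jabExps (a b : ℕ) : Set (Fin 2 →₀ ℕ) := {expVec a 0, expVec 0 b}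

noncomputable def iaExps (a b : ℕ) (A : Finset ℕ) : Set (Fin 2 →₀ ℕ) :=
  (fun i : ℕ => expVec (i * (a / Nat.gcd a b)) (b - i * (b / Nat.gcd a b))) '' (A : Set ℕ)

noncomputable def heavyExps (a b : ℕ) (ρ : ℝ) : Set (Fin 2 →₀ ℕ) :=
  {s | ρ * ((a : ℝ) * (b : ℝ)) < weight ![b, a] s}

variable (K : Type*) [Field K] (a b : ℕ)

theorem Jab_eq_monomialIdeal : Jab K a b = monomialIdeal K (jabExps a b) := by
  rw [Jab, monomialIdeal, jabExps, Set.image_pair, mono_eq_monomial, mono_eq_monomial]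

theorem IA_eq_monomialIdeal (A : Finset ℕ) : IA K a b A = monomialIdeal K (iaExps a b A) := by
  simp only [IA, monomialIdeal, iaExps, Set.image_image, mono_eq_monomial]

theorem span_heavy_eq_monomialIdeal (ρ : ℝ) :
    Ideal.span {f | ∃ c d : ℕ, f = mono K c d ∧
        ρ * ((a : ℝ) * (b : ℝ)) < ((b * c + a * d : ℕ) : ℝ)} =
      monomialIdeal K (heavyExps a b ρ) := by
  rw [monomialIdeal]
  congr 1
  ext f
  constructor
  · rintro ⟨c, d, rfl, h⟩
    exact ⟨expVec c d, by simpa [heavyExps, weight_eq_mul_add_mul] using h,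
      (mono_eq_monomial K c d).symm⟩
  · rintro ⟨s, hs, rfl⟩
    refine ⟨s 0, s 1, ?_, by simpa [heavyExps, weight_eq_mul_add_mul] using hs⟩
    rw [mono_eq_monomial]
    congr
    ext i; fin_cases i <;> simp

variable {a b}

theorem weight_of_mem_jabExps {s : Fin 2 →₀ ℕ} (hs : s ∈ jabExps a b) :
    weight ![b, a] s = a * b := by
  rcases hs with rfl | rfl <;> simp [weight_eq_mul_add_mul, mul_comm]

theorem weight_of_mem_iaExps {A : Finset ℕ} (hA2 : A ⊆ Finset.range (Nat.gcd a b + 1))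
    {s : Fin 2 →₀ ℕ} (hs : s ∈ iaExps a b A) : weight ![b, a] s = a * b := by
  obtain ⟨i, hi, rfl⟩ := hs
  have hig : i ≤ Nat.gcd a b := Nat.lt_succ_iff.mp (Finset.mem_range.mp (hA2 hi))
  have ha' : Nat.gcd a b * (a / Nat.gcd a b) = a := Nat.mul_div_cancel' (Nat.gcd_dvd_left a b)
  have hb' : Nat.gcd a b * (b / Nat.gcd a b) = b := Nat.mul_div_cancel' (Nat.gcd_dvd_right a b)
  have hib : i * (b / Nat.gcd a b) ≤ b := hb'.le.trans' (Nat.mul_le_mul_right _ hig)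
  rw [weight_eq_mul_add_mul, expVec_apply_zero, expVec_apply_one]
  generalize a / Nat.gcd a b = a' at *
  generalize b / Nat.gcd a b = b' at *
  generalize Nat.gcd a b = g at *
  zify [hib] at ha' hb' ⊢
  linear_combination (-(i : ℤ) * a') * hb' + ((i : ℤ) * b') * ha'

theorem jabExps_subset_iaExps {A : Finset ℕ} (hA1 : ({0, Nat.gcd a b} : Finset ℕ) ⊆ A) :
    jabExps a b ⊆ iaExps a b A := by
  rintro s (rfl | rfl)
  · refine ⟨Nat.gcd a b, by simpa using hA1 (by simp), ?_⟩
    simp only [Nat.mul_div_cancel' (Nat.gcd_dvd_left a b),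
      Nat.mul_div_cancel' (Nat.gcd_dvd_right a b), Nat.sub_self]
  · exact ⟨0, by simpa using hA1 (by simp), by simp⟩

theorem exists_mem_jabExps_le (ha : 0 < a) (hb : 0 < b) {s : Fin 2 →₀ ℕ}
    (hs : 2 * (a * b) ≤ weight ![b, a] s) : ∃ v ∈ jabExps a b, v ≤ s := by
  by_contra! h
  have hx : s 0 < a := by simpa [expVec_le_iff] using h _ (Or.inl rfl)
  have hy : s 1 < b := by simpa [expVec_le_iff] using h _ (Or.inr rfl)
  rw [weight_eq_mul_add_mul] at hs
  nlinarith

theorem mem_jabExps_add_heavyExps (ha : 0 < a) (hb : 0 < b) {ρ : ℝ} (hρ : 1 ≤ ρ)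
    {s : Fin 2 →₀ ℕ} (hs : (1 + ρ) * ((a : ℝ) * (b : ℝ)) < weight ![b, a] s) :
    s ∈ jabExps a b + heavyExps a b ρ := by
  have hab : (0 : ℝ) ≤ (a : ℝ) * (b : ℝ) := by positivity
  have h2 : ((2 * (a * b) : ℕ) : ℝ) ≤ weight ![b, a] s := by push_cast; nlinarith
  obtain ⟨v, hv, hvs⟩ := exists_mem_jabExps_le ha hb (by exact_mod_cast h2)
  refine ⟨v, hv, s - v, ?_, add_tsub_cancel_of_le hvs⟩
  have hsplit := congrArg (fun t => (weight ![b, a] t : ℝ)) (add_tsub_cancel_of_le hvs)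
  simp only [map_add, Nat.cast_add, weight_of_mem_jabExps hv, Nat.cast_mul] at hsplit
  show ρ * ((a : ℝ) * (b : ℝ)) < weight ![b, a] (s - v)
  linarith

variable {A : Finset ℕ} {ρ : ℝ}

theorem Jab_le_IA (hA1 : ({0, Nat.gcd a b} : Finset ℕ) ⊆ A) : Jab K a b ≤ IA K a b A := by
  rw [Jab_eq_monomialIdeal, IA_eq_monomialIdeal]
  exact monomialIdeal_mono (jabExps_subset_iaExps hA1)

theorem IA_mul_heavy_le (ha : 0 < a) (hb : 0 < b) (hρ : 1 ≤ ρ)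
    (hA2 : A ⊆ Finset.range (Nat.gcd a b + 1)) :
    IA K a b A * monomialIdeal K (heavyExps a b ρ) ≤
      Jab K a b * monomialIdeal K (heavyExps a b ρ) := by
  rw [Jab_eq_monomialIdeal, IA_eq_monomialIdeal, ← monomialIdeal_add, ← monomialIdeal_add]
  refine monomialIdeal_mono ?_
  rintro _ ⟨s, hs, t, ht, rfl⟩
  refine mem_jabExps_add_heavyExps ha hb hρ ?_
  have ht' : ρ * ((a : ℝ) * (b : ℝ)) < weight ![b, a] t := ht
  push_cast [map_add, weight_of_mem_iaExps hA2 hs]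
  linarith

theorem heavy_mul_heavy_le (ha : 0 < a) (hb : 0 < b) (hρ : 1 ≤ ρ) :
    monomialIdeal K (heavyExps a b ρ) * monomialIdeal K (heavyExps a b ρ) ≤
      Jab K a b * monomialIdeal K (heavyExps a b ρ) := by
  rw [Jab_eq_monomialIdeal, ← monomialIdeal_add, ← monomialIdeal_add]
  refine monomialIdeal_mono ?_
  rintro _ ⟨s, hs, t, ht, rfl⟩
  refine mem_jabExps_add_heavyExps ha hb hρ ?_
  have hs' : ρ * ((a : ℝ) * (b : ℝ)) < weight ![b, a] s := hs
  have ht' : ρ * ((a : ℝ) * (b : ℝ)) < weight ![b, a] t := ht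
  have hab : (0 : ℝ) ≤ (a : ℝ) * (b : ℝ) := by positivity
  push_cast [map_add]
  nlinarith

theorem IA_pow_succ_succ_le_iff (hρ : 1 ≤ ρ) (hA1 : ({0, Nat.gcd a b} : Finset ℕ) ⊆ A)
    (hA2 : A ⊆ Finset.range (Nat.gcd a b + 1)) (n : ℕ) :
    IA K a b A ^ (n + 2) ≤
        Jab K a b * IA K a b A ^ (n + 1) +
          Jab K a b ^ (n + 1) * monomialIdeal K (heavyExps a b ρ) ↔
      IA K a b A ^ (n + 2) = Jab K a b * IA K a b A ^ (n + 1) := by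
  refine ⟨fun h => le_antisymm ?_ ?_, fun h => h ▸ le_sup_left⟩
  · simp only [Jab_eq_monomialIdeal, IA_eq_monomialIdeal, ← monomialIdeal_nsmul,
      ← monomialIdeal_add] at h ⊢
    refine monomialIdeal_le_of_le_sup (fun s hs t ht hts => ?_) h
    obtain ⟨u, hu, v, hv, rfl⟩ := ht
    have hv' : ρ * ((a : ℝ) * (b : ℝ)) < weight ![b, a] v := hv
    have hle : ((weight ![b, a] (u + v) : ℕ) : ℝ) ≤ weight ![b, a] s := by
      exact_mod_cast Finsupp.weight_mono _ hts
    rw [Finsupp.weight_eq_of_mem_nsmul (fun _ => weight_of_mem_iaExps hA2) _ s hs, map_add,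
      Finsupp.weight_eq_of_mem_nsmul (fun _ => weight_of_mem_jabExps) _ u hu] at hle
    have hab : (0 : ℝ) ≤ (a : ℝ) * (b : ℝ) := by positivity
    push_cast at hle
    nlinarith
  · rw [pow_succ' _ (n + 1)]
    exact Ideal.mul_mono_left (Jab_le_IA K hA1)

end BivariateReduction

open BivariateReduction in
theorem stmt14 (K : Type*) [Field K] (a b : ℕ) (ha : 0 < a) (hab : a ≤ b)
    (A : Finset ℕ) (hA1 : ({0, Nat.gcd a b} : Finset ℕ) ⊆ A)
    (hA2 : A ⊆ Finset.range (Nat.gcd a b + 1)) (ρ : ℝ) (hρ : 1 ≤ ρ) :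
    let I' : Ideal (MvPolynomial (Fin 2) K) :=
      Ideal.span {f | ∃ c d : ℕ, f = mono K c d ∧
        ρ * ((a : ℝ) * (b : ℝ)) < ((b * c + a * d : ℕ) : ℝ)}
    let I := IA K a b A + I'
    (IA K a b A = Jab K a b → I ^ 2 = Jab K a b * I)
    ∧ (IA K a b A ≠ Jab K a b → redNum K a b I = redNum K a b (IA K a b A)) := by
  have hb : 0 < b := ha.trans_le hab
  simp only [span_heavy_eq_monomialIdeal]
  have hJA := Jab_le_IA K hA1
  have hAP := IA_mul_heavy_le K ha hb hρ hA2
  have hPP := heavy_mul_heavy_le K ha hb hρ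
  refine ⟨fun hAJ => ?_, fun hAJ => ?_⟩
  · have hsq := Ideal.add_pow_succ_eq hJA hAP hPP 1
    simp only [Nat.reduceAdd, pow_one] at hsq
    rw [hsq, hAJ, sq, ← mul_add]
  · have hstep : ∀ r, (IA K a b A + monomialIdeal K (heavyExps a b ρ)) ^ (r + 1) =
          Jab K a b * (IA K a b A + monomialIdeal K (heavyExps a b ρ)) ^ r ↔
        IA K a b A ^ (r + 1) = Jab K a b * IA K a b A ^ r
      | 0 => by
        simp only [zero_add, pow_one, pow_zero, mul_one]
        exact iff_of_false (fun h => hAJ (le_antisymm (h ▸ le_sup_left) hJA)) hAJ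
      | n + 1 =>
        (Ideal.add_pow_succ_succ_eq_mul_iff hJA hAP hPP n).trans
          (IA_pow_succ_succ_le_iff K hρ hA1 hA2 n)
    simp only [redNum, hstep]
end

section
/- Let K be a field, a, b integers with 1 < a ≤ b, and let (c,d) be a pair of integers with 0 < c < a, 0 < d < b and bc + ad ≥ ab; set I = (x^a, y^b, x^c y^d) and J = (x^a, y^b). For each i ≥ 1 write i·c = rᵢ·a + cᵢ and i·d = sᵢ·b + dᵢ with 0 ≤ cᵢ < a and 0 ≤ dᵢ < b (so rᵢ = ⌊ic/a⌋, sᵢ = ⌊id/b⌋). Then there is a least positive integer k with r_k + s_k ≥ k, and the ideal L = (x^a, y^b) + (x^{cᵢ} y^{dᵢ} : 1 ≤ i ≤ k−1) satisfies: every monomial x^{c'} y^{d'} ∈ L has bc' + ad' ≥ ab, L ≠ J, L² = J·L, and L ⊆ M for every monomial ideal M of K[x,y] with I ⊆ M and M² = J·M. In other words, L is the unique smallest monomial ideal containing I whose reduction number with respect to J equals 1. -/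
open MvPolynomial

/-- An ideal of `K[x,y]` is a monomial ideal if it is generated by a set of
monomials `x^c y^d`. -/
def IsMonomialIdeal (K : Type*) [Field K] (I : Ideal (MvPolynomial (Fin 2) K)) : Prop :=
  ∃ S : Set (ℕ × ℕ), I = Ideal.span ((fun p : ℕ × ℕ => mono K p.1 p.2) '' S)

/-- `I` belongs to the class `I_{a,b}`: it is a monomial ideal containing
`x^a` and `y^b`, and every monomial `x^c y^d ∈ I` satisfies `bc + ad ≥ ab`. -/
def InClass (K : Type*) [Field K] (a b : ℕ) (I : Ideal (MvPolynomial (Fin 2) K)) : Prop :=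
  IsMonomialIdeal K I ∧ mono K a 0 ∈ I ∧ mono K 0 b ∈ I ∧
    ∀ c d : ℕ, mono K c d ∈ I → a * b ≤ b * c + a * d

/-- exponent finsupp -/
noncomputable def expf (u v : ℕ) : Fin 2 →₀ ℕ :=
  Finsupp.single 0 u + Finsupp.single 1 v

lemma mono_eq (K : Type*) [Field K] (u v : ℕ) :
    mono K u v = monomial (expf u v) (1 : K) := by
  rw [mono, X_pow_eq_monomial, X_pow_eq_monomial, monomial_mul, one_mul, expf]

lemma expf_apply0 (u v : ℕ) : expf u v 0 = u := by
  simp [expf, Finsupp.single_apply]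

lemma expf_apply1 (u v : ℕ) : expf u v 1 = v := by
  simp [expf, Finsupp.single_apply]

lemma expf_le (p q u v : ℕ) : expf p q ≤ expf u v ↔ p ≤ u ∧ q ≤ v := by
  constructor
  · intro hle
    exact ⟨by simpa [expf_apply0] using hle 0, by simpa [expf_apply1] using hle 1⟩
  · rintro ⟨h1, h2⟩ i
    fin_cases i
    · simpa [expf_apply0] using h1
    · simpa [expf_apply1] using h2

lemma mem_msp (K : Type*) [Field K] (T : Set (ℕ × ℕ)) (u v : ℕ) :
    mono K u v ∈ Ideal.span ((fun p : ℕ × ℕ => mono K p.1 p.2) '' T) ↔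
      ∃ p ∈ T, p.1 ≤ u ∧ p.2 ≤ v := by
  have himg : (fun p : ℕ × ℕ => mono K p.1 p.2) '' T
      = (fun s => monomial s (1 : K)) '' ((fun p : ℕ × ℕ => expf p.1 p.2) '' T) := by
    rw [Set.image_image]
    exact Set.image_congr fun p _ => mono_eq K p.1 p.2
  classical
  rw [himg, mono_eq, mem_ideal_span_monomial_image]
  rw [support_monomial, if_neg (one_ne_zero : (1:K) ≠ 0)]
  simp only [Finset.mem_singleton]
  constructor
  · intro hx
    obtain ⟨si, hsi, hle⟩ := hx (expf u v) rfl
    obtain ⟨p, hp, rfl⟩ := hsi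
    exact ⟨p, hp, (expf_le _ _ _ _).1 hle⟩
  · rintro ⟨p, hp, h1, h2⟩ xi rfl
    exact ⟨expf p.1 p.2, ⟨p, hp, rfl⟩, (expf_le _ _ _ _).2 ⟨h1, h2⟩⟩

lemma mono_mul_s16 (K : Type*) [Field K] (p q : ℕ × ℕ) :
    mono K p.1 p.2 * mono K q.1 q.2 = mono K (p.1 + q.1) (p.2 + q.2) := by
  simp only [mono, pow_add]; ring

lemma msp_mul (K : Type*) [Field K] (S T : Set (ℕ × ℕ)) :
    Ideal.span ((fun p : ℕ × ℕ => mono K p.1 p.2) '' S) *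
      Ideal.span ((fun p : ℕ × ℕ => mono K p.1 p.2) '' T) =
    Ideal.span ((fun p : ℕ × ℕ => mono K p.1 p.2) '' (Set.image2 (· + ·) S T)) := by
  rw [Ideal.span_mul_span']
  congr 1
  rw [← Set.image2_mul, Set.image2_image_left, Set.image2_image_right,
    Set.image_image2]
  exact Set.image2_congr fun p _ q _ => mono_mul_s16 K p q


/-- Abstract away a division/modulus pair. -/
lemma divmod (x a : ℕ) (ha : 0 < a) :
    ∃ p u, x / a = p ∧ x % a = u ∧ x = a * p + u ∧ u < a :=
  ⟨x / a, x % a, rfl, rfl, (Nat.div_add_mod x a).symm, Nat.mod_lt x ha⟩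

lemma dichotomy (a b c d i : ℕ) (ha : 0 < a) (hb : 0 < b)
    (h : a * b ≤ b * c + a * d) : i ≤ i * c / a + i * d / b + 1 := by
  obtain ⟨R, C, hR, hC, hx, hCa⟩ := divmod (i * c) a ha
  obtain ⟨S, D, hS, hD, hy, hDb⟩ := divmod (i * d) b hb
  rw [hR, hS]
  have e1 : b * (i * c) = a * b * R + b * C := by rw [hx]; ring
  have e2 : a * (i * d) = a * b * S + a * D := by rw [hy]; ring
  have e3 : i * (b * c + a * d) = b * (i * c) + a * (i * d) := by ring
  have e4 : i * (a * b) ≤ i * (b * c + a * d) := Nat.mul_le_mul_left i h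
  have e5 : b * C + b ≤ a * b := by
    have : b * (C + 1) ≤ b * a := Nat.mul_le_mul_left b hCa
    have hh : b * (C + 1) = b * C + b := by ring
    have hh2 : b * a = a * b := by ring
    omega
  have e6 : a * D + a ≤ a * b := by
    have : a * (D + 1) ≤ a * b := Nat.mul_le_mul_left a hDb
    have hh : a * (D + 1) = a * D + a := by ring
    omega
  have key : a * b * i < a * b * (R + S + 2) := by
    have f1 : a * b * (R + S + 2) = a * b * R + a * b * S + a * b + a * b := by ring
    have f2 : a * b * i = i * (a * b) := by ring
    omega
  have := Nat.lt_of_mul_lt_mul_left key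
  omega

lemma weight (a b c d i : ℕ) (ha : 0 < a) (hb : 0 < b)
    (h : a * b ≤ b * c + a * d) (hEqi : i * c / a + i * d / b + 1 = i) :
    a * b ≤ b * (i * c % a) + a * (i * d % b) := by
  obtain ⟨R, C, hR, hC, hx, hCa⟩ := divmod (i * c) a ha
  obtain ⟨S, D, hS, hD, hy, hDb⟩ := divmod (i * d) b hb
  rw [hR, hS] at hEqi
  rw [hC, hD]
  have e1 : b * (i * c) = a * b * R + b * C := by rw [hx]; ring
  have e2 : a * (i * d) = a * b * S + a * D := by rw [hy]; ring
  have e3 : i * (b * c + a * d) = b * (i * c) + a * (i * d) := by ring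
  have e4 : i * (a * b) ≤ i * (b * c + a * d) := Nat.mul_le_mul_left i h
  have e5 : i * (a * b) = a * b * R + a * b * S + a * b := by
    rw [← hEqi]; ring
  omega

/-- carries when adding two numbers, w.r.t. division by `a` -/
lemma add_split (a x y : ℕ) (ha : 0 < a) :
    (x % a + y % a = (x + y) % a ∧ (x + y) / a = x / a + y / a) ∨
    (x % a + y % a = a + (x + y) % a ∧ (x + y) / a = x / a + y / a + 1) := by
  obtain ⟨p, u, hp, hu, hx, hua⟩ := divmod x a ha
  obtain ⟨q, v, hq, hv, hy, hva⟩ := divmod y a ha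
  rw [hp, hu, hq, hv]
  by_cases hle : a ≤ u + v
  · right
    have hsum : x + y = a * (p + q + 1) + (u + v - a) := by
      have : a * (p + q + 1) = a * p + a * q + a := by ring
      omega
    have := (Nat.div_mod_unique ha (a := x + y) (d := p + q + 1) (c := u + v - a)).2
      ⟨by omega, by omega⟩
    omega
  · left
    have hsum : x + y = a * (p + q) + (u + v) := by
      have : a * (p + q) = a * p + a * q := by ring
      omega
    have := (Nat.div_mod_unique ha (a := x + y) (d := p + q) (c := u + v)).2
      ⟨by omega, by omega⟩
    omega

lemma add_split' (a c i j : ℕ) (ha : 0 < a) :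
    (i * c % a + j * c % a = (i + j) * c % a ∧ (i + j) * c / a = i * c / a + j * c / a) ∨
    (i * c % a + j * c % a = a + (i + j) * c % a ∧
      (i + j) * c / a = i * c / a + j * c / a + 1) := by
  have h := add_split a (i * c) (j * c) ha
  rwa [← Nat.add_mul] at h

lemma core (a b c d k : ℕ) (ha : 0 < a) (hb : 0 < b) (h : a * b ≤ b * c + a * d)
    (hk2 : k ≤ k * c / a + k * d / b)
    (hEq : ∀ m, 0 < m → m < k → m * c / a + m * d / b + 1 = m)
    (i j : ℕ) (hi1 : 1 ≤ i) (hik : i ≤ k - 1) (hj1 : 1 ≤ j) (hjk : j ≤ k - 1) :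
    (a ≤ i * c % a + j * c % a ∧ b ≤ i * d % b + j * d % b) ∨
    (∃ m, 1 ≤ m ∧ m ≤ k - 1 ∧ a + m * c % a ≤ i * c % a + j * c % a ∧
      m * d % b ≤ i * d % b + j * d % b) ∨
    (∃ m, 1 ≤ m ∧ m ≤ k - 1 ∧ m * c % a ≤ i * c % a + j * c % a ∧
      b + m * d % b ≤ i * d % b + j * d % b) := by
  have hk0 : 2 ≤ k := by
    rcases Nat.lt_or_ge k 2 with hlt | hge
    · exfalso; omega
    · exact hge
  have hEqi := hEq i (by omega) (by omega)
  have hEqj := hEq j (by omega) (by omega)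
  have hdich := dichotomy a b c d (i + j) ha hb h
  rcases add_split' a c i j ha with ⟨ex1, ex2⟩ | ⟨ex1, ex2⟩ <;>
    rcases add_split' b d i j hb with ⟨ey1, ey2⟩ | ⟨ey1, ey2⟩
  · -- no carries: contradiction with dichotomy
    exfalso; omega
  · -- y-carry only
    by_cases hnk : i + j ≤ k - 1
    · exact Or.inr (Or.inr ⟨i + j, by omega, hnk, by omega, by omega⟩)
    · have hne : i + j ≠ k := by
        intro hkn
        have h1 : (i + j) * c / a = k * c / a := by rw [hkn]
        have h2 : (i + j) * d / b = k * d / b := by rw [hkn]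
        omega
      have hm1 : 1 ≤ i + j - k := by omega
      set m := i + j - k with hmdef
      have hEqm := hEq m (by omega) (by omega)
      have hmk : m + k = i + j := by omega
      have hsx := add_split' a c m k ha
      have hsy := add_split' b d m k hb
      rw [hmk] at hsx hsy
      rcases hsx with ⟨fx1, fx2⟩ | ⟨fx1, fx2⟩ <;> rcases hsy with ⟨fy1, fy2⟩ | ⟨fy1, fy2⟩
      · exact Or.inr (Or.inr ⟨m, hm1, by omega, by omega, by omega⟩)
      · exfalso; omega
      · exfalso; omega
      · exfalso; omega
  · -- x-carry only
    by_cases hnk : i + j ≤ k - 1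
    · exact Or.inr (Or.inl ⟨i + j, by omega, hnk, by omega, by omega⟩)
    · have hne : i + j ≠ k := by
        intro hkn
        have h1 : (i + j) * c / a = k * c / a := by rw [hkn]
        have h2 : (i + j) * d / b = k * d / b := by rw [hkn]
        omega
      have hm1 : 1 ≤ i + j - k := by omega
      set m := i + j - k with hmdef
      have hEqm := hEq m (by omega) (by omega)
      have hmk : m + k = i + j := by omega
      have hsx := add_split' a c m k ha
      have hsy := add_split' b d m k hb
      rw [hmk] at hsx hsy
      rcases hsx with ⟨fx1, fx2⟩ | ⟨fx1, fx2⟩ <;> rcases hsy with ⟨fy1, fy2⟩ | ⟨fy1, fy2⟩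
      · exact Or.inr (Or.inl ⟨m, hm1, by omega, by omega, by omega⟩)
      · exfalso; omega
      · exfalso; omega
      · exfalso; omega
  · -- both carries
    exact Or.inl ⟨by omega, by omega⟩

lemma step (a b c d k : ℕ) (ha : 0 < a) (hb : 0 < b) (hca : c < a) (hdb : d < b)
    (h : a * b ≤ b * c + a * d)
    (hEq : ∀ m, 0 < m → m < k → m * c / a + m * d / b + 1 = m)
    (n : ℕ) (hn1 : 1 ≤ n) (hnk : n + 1 ≤ k - 1) :
    (n * c % a + c = a + (n + 1) * c % a ∧ n * d % b + d = (n + 1) * d % b) ∨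
    (n * c % a + c = (n + 1) * c % a ∧ n * d % b + d = b + (n + 1) * d % b) := by
  have h1c : 1 * c % a = c := by rw [one_mul]; exact Nat.mod_eq_of_lt hca
  have h1d : 1 * d % b = d := by rw [one_mul]; exact Nat.mod_eq_of_lt hdb
  have h1c' : 1 * c / a = 0 := by rw [one_mul]; exact Nat.div_eq_of_lt hca
  have h1d' : 1 * d / b = 0 := by rw [one_mul]; exact Nat.div_eq_of_lt hdb
  have hEqn := hEq n (by omega) (by omega)
  have hEqn1 := hEq (n + 1) (by omega) (by omega)
  have hsx := add_split' a c n 1 ha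
  have hsy := add_split' b d n 1 hb
  rw [h1c, h1c'] at hsx
  rw [h1d, h1d'] at hsy
  rcases hsx with ⟨fx1, fx2⟩ | ⟨fx1, fx2⟩ <;> rcases hsy with ⟨fy1, fy2⟩ | ⟨fy1, fy2⟩
  · exfalso; omega
  · exact Or.inr ⟨by omega, by omega⟩
  · exact Or.inl ⟨by omega, by omega⟩
  · exfalso; omega

theorem stmt16 (K : Type*) [Field K] (a b c d : ℕ) (ha : 1 < a) (hab : a ≤ b)
    (hc : 0 < c) (hca : c < a) (hd : 0 < d) (hdb : d < b)
    (h : a * b ≤ b * c + a * d) :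
    let k := sInf {k : ℕ | 0 < k ∧ k ≤ k * c / a + k * d / b}
    let L := Jab K a b ⊔
      Ideal.span ((fun i : ℕ => mono K (i * c % a) (i * d % b)) '' Set.Icc 1 (k - 1))
    (0 < k ∧ k ≤ k * c / a + k * d / b)
    ∧ (∀ c' d' : ℕ, mono K c' d' ∈ L → a * b ≤ b * c' + a * d')
    ∧ L ≠ Jab K a b
    ∧ L ^ 2 = Jab K a b * L
    ∧ ∀ M : Ideal (MvPolynomial (Fin 2) K), IsMonomialIdeal K M →
        Ideal.span {mono K a 0, mono K 0 b, mono K c d} ≤ M →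
        M ^ 2 = Jab K a b * M → L ≤ M := by
  intro k L
  have ha0 : 0 < a := by omega
  have hb0 : 0 < b := by omega
  have hkdef : k = sInf {k : ℕ | 0 < k ∧ k ≤ k * c / a + k * d / b} := rfl
  have hne : ({k : ℕ | 0 < k ∧ k ≤ k * c / a + k * d / b}).Nonempty := by
    refine ⟨a * b, Nat.mul_pos ha0 hb0, ?_⟩
    have h1 : a * b * c / a = b * c := by
      rw [mul_assoc, Nat.mul_div_cancel_left _ ha0]
    have h2 : a * b * d / b = a * d := by
      rw [show a * b * d = b * (a * d) by ring, Nat.mul_div_cancel_left _ hb0]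
    omega
  have hkmem := Nat.sInf_mem hne
  rw [← hkdef] at hkmem
  obtain ⟨hk1, hk2⟩ := hkmem
  have hmin : ∀ m, 0 < m → m < k → m * c / a + m * d / b + 1 = m := by
    intro m hm hmk
    have hd1 := dichotomy a b c d m ha0 hb0 h
    have hnotmem : m ∉ {k : ℕ | 0 < k ∧ k ≤ k * c / a + k * d / b} :=
      Nat.notMem_of_lt_sInf (hkdef ▸ hmk)
    simp only [Set.mem_setOf_eq, not_and, not_le] at hnotmem
    have := hnotmem hm
    omega
  have hkge2 : 2 ≤ k := by
    have h1 : 1 * c / a = 0 := by rw [one_mul]; exact Nat.div_eq_of_lt hca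
    have h2 : 1 * d / b = 0 := by rw [one_mul]; exact Nat.div_eq_of_lt hdb
    by_contra hcon
    have hk1' : k = 1 := by omega
    rw [hk1'] at hk2
    omega
  have hJ : Jab K a b = Ideal.span
      ((fun p : ℕ × ℕ => mono K p.1 p.2) '' {((a : ℕ), (0 : ℕ)), ((0 : ℕ), (b : ℕ))}) := by
    rw [Jab, Set.image_pair]
  have hL : L = Ideal.span ((fun p : ℕ × ℕ => mono K p.1 p.2) ''
      ({((a : ℕ), (0 : ℕ)), ((0 : ℕ), (b : ℕ))} ∪
        (fun i : ℕ => (i * c % a, i * d % b)) '' Set.Icc 1 (k - 1))) := by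
    show Jab K a b ⊔ _ = _
    rw [Set.image_union, Ideal.span_union, hJ, Set.image_image]
  have hw : ∀ p ∈ ({((a : ℕ), (0 : ℕ)), ((0 : ℕ), (b : ℕ))} ∪
      (fun i : ℕ => (i * c % a, i * d % b)) '' Set.Icc 1 (k - 1)),
      a * b ≤ b * p.1 + a * p.2 := by
    rintro p (hp | ⟨i, hi, rfl⟩)
    · simp only [Set.mem_insert_iff, Set.mem_singleton_iff] at hp
      rcases hp with rfl | rfl
      · have hcomm : b * a = a * b := Nat.mul_comm b a
        simp only []
        omega
      · simp only []
        omega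
    · rcases Set.mem_Icc.1 hi with ⟨hi1, hik⟩
      exact weight a b c d i ha0 hb0 h (hmin i (by omega) (by omega))
  refine ⟨⟨hk1, hk2⟩, ?_, ?_, ?_, ?_⟩
  · -- every monomial in L has large weight
    intro c' d' hmem
    rw [hL] at hmem
    obtain ⟨p, hp, h1, h2⟩ := (mem_msp K _ c' d').1 hmem
    have hwp := hw p hp
    have g1 : b * p.1 ≤ b * c' := Nat.mul_le_mul_left b h1
    have g2 : a * p.2 ≤ a * d' := Nat.mul_le_mul_left a h2
    omega
  · -- L ≠ J
    intro hLJ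
    have hm : mono K c d ∈ L := by
      rw [hL]
      refine (mem_msp K _ c d).2 ⟨(1 * c % a, 1 * d % b),
        Set.mem_union_right _ ⟨1, Set.mem_Icc.2 ⟨le_refl 1, by omega⟩, rfl⟩, ?_, ?_⟩
      · exact le_of_eq (show (1 : ℕ) * c % a = c from by
          rw [one_mul]; exact Nat.mod_eq_of_lt hca)
      · exact le_of_eq (show (1 : ℕ) * d % b = d from by
          rw [one_mul]; exact Nat.mod_eq_of_lt hdb)
    rw [hLJ, hJ] at hm
    obtain ⟨p, hp, h1, h2⟩ := (mem_msp K _ c d).1 hm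
    simp only [Set.mem_insert_iff, Set.mem_singleton_iff] at hp
    rcases hp with rfl | rfl
    · exact absurd h1 (by omega)
    · exact absurd h2 (by omega)
  · -- L^2 = J * L
    have hJL : Jab K a b ≤ L := by
      rw [hJ, hL]
      exact Ideal.span_mono (Set.image_mono Set.subset_union_left)
    apply le_antisymm
    · rw [hL, hJ, pow_two, msp_mul, msp_mul]
      apply Ideal.span_le.2
      rintro x ⟨q, hq, rfl⟩
      rcases hq with ⟨g, hg, p, hp, rfl⟩
      rcases hg with hgJ | ⟨i, hi, rfl⟩
      · exact Ideal.subset_span ⟨g + p, Set.mem_image2_of_mem hgJ hp, rfl⟩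
      · rcases hp with hpJ | ⟨j, hj, rfl⟩
        · refine (mem_msp K _ _ _).2 ⟨p + (i * c % a, i * d % b),
            Set.mem_image2_of_mem hpJ (Set.mem_union_right _ ⟨i, hi, rfl⟩), ?_, ?_⟩
          · exact le_of_eq (Nat.add_comm _ _)
          · exact le_of_eq (Nat.add_comm _ _)
        · rcases Set.mem_Icc.1 hi with ⟨hi1, hik⟩
          rcases Set.mem_Icc.1 hj with ⟨hj1, hjk⟩
          rcases core a b c d k ha0 hb0 h hk2 hmin i j hi1 hik hj1 hjk with
            ⟨w1, w2⟩ | ⟨m, hm1, hmk, w1, w2⟩ | ⟨m, hm1, hmk, w1, w2⟩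
          · refine (mem_msp K _ _ _).2 ⟨((a : ℕ), (0 : ℕ)) + ((0 : ℕ), (b : ℕ)),
              Set.mem_image2_of_mem (Set.mem_insert _ _)
                (Set.mem_union_left _ (Set.mem_insert_of_mem _ rfl)), ?_, ?_⟩
            · simpa using w1
            · simpa using w2
          · refine (mem_msp K _ _ _).2 ⟨((a : ℕ), (0 : ℕ)) + (m * c % a, m * d % b),
              Set.mem_image2_of_mem (Set.mem_insert _ _)
                (Set.mem_union_right _ ⟨m, Set.mem_Icc.2 ⟨hm1, hmk⟩, rfl⟩), ?_, ?_⟩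
            · exact w1
            · simpa using w2
          · refine (mem_msp K _ _ _).2 ⟨((0 : ℕ), (b : ℕ)) + (m * c % a, m * d % b),
              Set.mem_image2_of_mem (Set.mem_insert_of_mem _ rfl)
                (Set.mem_union_right _ ⟨m, Set.mem_Icc.2 ⟨hm1, hmk⟩, rfl⟩), ?_, ?_⟩
            · simpa using w1
            · exact w2
    · calc Jab K a b * L ≤ L * L := Ideal.mul_mono_left hJL
        _ = L ^ 2 := (pow_two L).symm
  · -- minimality
    intro M hMon hIM hM2
    obtain ⟨S, rfl⟩ := hMon
    have hmcd : mono K c d ∈ Ideal.span ((fun p : ℕ × ℕ => mono K p.1 p.2) '' S) :=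
      hIM (Ideal.subset_span (by simp))
    have hxa : mono K a 0 ∈ Ideal.span ((fun p : ℕ × ℕ => mono K p.1 p.2) '' S) :=
      hIM (Ideal.subset_span (by simp))
    have hyb : mono K 0 b ∈ Ideal.span ((fun p : ℕ × ℕ => mono K p.1 p.2) '' S) :=
      hIM (Ideal.subset_span (by simp))
    have main : ∀ i, 1 ≤ i → i ≤ k - 1 →
        mono K (i * c % a) (i * d % b) ∈
          Ideal.span ((fun p : ℕ × ℕ => mono K p.1 p.2) '' S) := by
      intro i
      induction i with
      | zero => intro h1 _; exact absurd h1 (by omega)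
      | succ n ih =>
        intro _ hle
        by_cases hn0 : n = 0
        · subst hn0
          show mono K (1 * c % a) (1 * d % b) ∈ _
          rw [show 1 * c % a = c by rw [one_mul]; exact Nat.mod_eq_of_lt hca,
            show 1 * d % b = d by rw [one_mul]; exact Nat.mod_eq_of_lt hdb]
          exact hmcd
        · have hprev := ih (by omega) (by omega)
          have hstep := step a b c d k ha0 hb0 hca hdb h hmin n (by omega) hle
          have hmm := Ideal.mul_mem_mul hprev hmcd
          rw [← pow_two, hM2, hJ, msp_mul] at hmm
          rw [show mono K (n * c % a) (n * d % b) * mono K c d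
              = mono K (n * c % a + c) (n * d % b + d)
            from mono_mul_s16 K (n * c % a, n * d % b) (c, d)] at hmm
          obtain ⟨q, hq, hq1, hq2⟩ := (mem_msp K _ _ _).1 hmm
          obtain ⟨g, hg, p, hp, rfl⟩ := hq
          simp only [Set.mem_insert_iff, Set.mem_singleton_iff] at hg
          rcases hstep with ⟨e1, e2⟩ | ⟨e1, e2⟩
          · rcases hg with rfl | rfl
            · refine (mem_msp K _ _ _).2 ⟨p, hp, ?_, ?_⟩
              · have hq1' : a + p.1 ≤ n * c % a + c := hq1
                rw [e1] at hq1'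
                exact Nat.le_of_add_le_add_left hq1'
              · have hq2' : 0 + p.2 ≤ n * d % b + d := hq2
                rw [Nat.zero_add, e2] at hq2'
                exact hq2'
            · have hq2' : b + p.2 ≤ n * d % b + d := hq2
              rw [e2] at hq2'
              have hlt : (n + 1) * d % b < b := Nat.mod_lt _ hb0
              exact absurd (le_trans (Nat.le_add_right b p.2) hq2') (by omega)
          · rcases hg with rfl | rfl
            · have hq1' : a + p.1 ≤ n * c % a + c := hq1
              rw [e1] at hq1'
              have hlt : (n + 1) * c % a < a := Nat.mod_lt _ ha0
              exact absurd (le_trans (Nat.le_add_right a p.1) hq1') (by omega)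
            · refine (mem_msp K _ _ _).2 ⟨p, hp, ?_, ?_⟩
              · have hq1' : 0 + p.1 ≤ n * c % a + c := hq1
                rw [Nat.zero_add, e1] at hq1'
                exact hq1'
              · have hq2' : b + p.2 ≤ n * d % b + d := hq2
                rw [e2] at hq2'
                exact Nat.le_of_add_le_add_left hq2'
    rw [hL]
    apply Ideal.span_le.2
    rintro x ⟨p, hp, rfl⟩
    rcases hp with hpJ | ⟨i, hi, rfl⟩
    · simp only [Set.mem_insert_iff, Set.mem_singleton_iff] at hpJ
      rcases hpJ with rfl | rfl
      · exact hxa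
      · exact hyb
    · rcases Set.mem_Icc.1 hi with ⟨hi1, hik⟩
      exact main i hi1 hik
end
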